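/- arXiv:2601.04929 — 8 statements merged into one kernel-verified Lean document; each statement's English description precedes it below -/
import Mathlib

section
/- Let n and k be integers with n ≥ 2k+1. If G is a simple graph on n vertices containing no matching of size k+1, then the number of edges of G is at most max{C(2k+1, 2), C(k+1, 2) + (n−k−1)k}. -/
/-!
Induction on `k`, for graphs whose edges lie inside a vertex set `W` with `|W| ≥ 2k + 1`.
If some edge `xy` has `deg x + deg y ≤ |W| + k - 1`, deleting `x` and `y` removes at most
`deg x + deg y - 1` edges and leaves no matching of size `k`, and the bound satisfies
`f(|W| - 2, k - 1) + |W| + k - 2 ≤ f(|W|, k)`.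
Otherwise every non-isolated vertex has degree at least `k + 1`. Two distinct vertices `u`, `v`
missed by a maximum matching `M` have all their neighbours matched, and the partners of the
neighbours of `u` avoid the neighbours of `v`, so `deg u + deg v ≤ 2|M| ≤ 2k`. Hence at most one
non-isolated vertex is unmatched, all edges lie among `2k + 1` vertices, and there are at most
`C(2k + 1, 2)` of them.
-/

open Finset

def erdosGallaiBound (n k : ℕ) : ℕ :=
  max ((2 * k + 1).choose 2) ((k + 1).choose 2 + (n - k - 1) * k)

lemma erdosGallaiBound_sub_two_add_le {n j : ℕ} (h : 2 * j + 3 ≤ n) :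
    erdosGallaiBound (n - 2) j + (n + j - 1) ≤ erdosGallaiBound n (j + 1) := by
  obtain ⟨t, rfl⟩ := Nat.exists_eq_add_of_le h
  have hA : (j + 2).choose 2 = (j + 1).choose 2 + (j + 1) := by
    simp [Nat.choose_succ_succ', add_comm]
  have hB : (2 * j + 3).choose 2 = (2 * j + 1).choose 2 + (4 * j + 3) := by
    simp [Nat.choose_succ_succ']; omega
  have hB' : (2 * j + 1).choose 2 = j * (2 * j + 1) := by
    rw [Nat.choose_two_right, Nat.add_sub_cancel, Nat.div_eq_of_eq_mul_left two_pos]; ring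
  unfold erdosGallaiBound
  rw [show 2 * j + 3 + t - 2 - j - 1 = j + t by omega, show 2 * (j + 1) + 1 = 2 * j + 3 by omega,
    show 2 * j + 3 + t - (j + 1) - 1 = j + 1 + t by omega, show j + 1 + 1 = j + 2 by omega,
    show 2 * j + 3 + t + j - 1 = 3 * j + 2 + t by omega, hA, hB, ← max_add_add_right]
  refine max_le ?_ (le_max_of_le_right (by ring_nf; omega))
  rcases le_or_gt t (j + 1) with ht | ht
  · exact le_max_of_le_left (by omega)
  · exact le_max_of_le_right (by nlinarith [Nat.mul_le_mul_right j ht])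

namespace SimpleGraph

variable {V : Type*} {G H : SimpleGraph V} {M N : Finset (Sym2 V)} {k : ℕ} {u v x y : V}

def IsEdgeMatching (G : SimpleGraph V) (M : Finset (Sym2 V)) : Prop :=
  (∀ e ∈ M, e ∈ G.edgeSet) ∧
    (M : Set (Sym2 V)).Pairwise (fun e f => ∀ v, v ∈ e → v ∉ f)

def coveredVerts [DecidableEq V] (M : Finset (Sym2 V)) : Finset V :=
  M.biUnion Sym2.toFinset

section coveredVerts

variable [DecidableEq V]

@[simp]
lemma mem_coveredVerts : v ∈ coveredVerts M ↔ ∃ e ∈ M, v ∈ e := by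
  simp [coveredVerts, Sym2.mem_toFinset]

lemma coveredVerts_mono (h : N ⊆ M) : coveredVerts N ⊆ coveredVerts M :=
  biUnion_subset_biUnion_of_subset_left _ h

lemma card_coveredVerts_le : #(coveredVerts M) ≤ 2 * #M :=
  calc #(coveredVerts M) ≤ ∑ e ∈ M, #e.toFinset := card_biUnion_le
    _ ≤ ∑ _e ∈ M, 2 := sum_le_sum fun e _ => by rw [Sym2.card_toFinset]; split <;> omega
    _ = 2 * #M := by rw [sum_const, smul_eq_mul, mul_comm]

lemma mk_notMem_of_notMem_coveredVerts (hx : x ∉ coveredVerts M) : s(x, y) ∉ M :=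
  fun h => hx (mem_coveredVerts.2 ⟨_, h, Sym2.mem_mk_left x y⟩)

end coveredVerts

namespace IsEdgeMatching

lemma empty : G.IsEdgeMatching ∅ := ⟨by simp, by simp⟩

lemma singleton {e : Sym2 V} (he : e ∈ G.edgeSet) : G.IsEdgeMatching {e} :=
  ⟨by simpa using he, by simp⟩

lemma subset (hM : G.IsEdgeMatching M) (h : N ⊆ M) : G.IsEdgeMatching N :=
  ⟨fun e he => hM.1 e (h he), hM.2.mono (coe_subset.2 h)⟩

lemma mono (hM : G.IsEdgeMatching M) (h : G ≤ H) : H.IsEdgeMatching M :=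
  ⟨fun e he => edgeSet_mono h (hM.1 e he), hM.2⟩

lemma eq_of_mem (hM : G.IsEdgeMatching M) {e f : Sym2 V} (he : e ∈ M) (hf : f ∈ M)
    (hve : v ∈ e) (hvf : v ∈ f) : e = f :=
  by_contra fun hne => hM.2 he hf hne v hve hvf

lemma card_le (h : ¬ ∃ M : Finset (Sym2 V), #M = k + 1 ∧ G.IsEdgeMatching M)
    (hM : G.IsEdgeMatching M) : #M ≤ k := by
  by_contra! hk
  obtain ⟨N, hNM, hN⟩ := exists_subset_card_eq (show k + 1 ≤ #M by omega)
  exact h ⟨N, hN, hM.subset hNM⟩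

variable [DecidableEq V]

lemma insert (hM : G.IsEdgeMatching M) (hxy : G.Adj x y) (hx : x ∉ coveredVerts M)
    (hy : y ∉ coveredVerts M) : G.IsEdgeMatching (insert s(x, y) M) := by
  have hfree : ∀ f ∈ M, ∀ w ∈ s(x, y), w ∉ f := by
    rintro f hf w hw hwf
    rcases Sym2.mem_iff.1 hw with rfl | rfl
    exacts [hx (mem_coveredVerts.2 ⟨f, hf, hwf⟩), hy (mem_coveredVerts.2 ⟨f, hf, hwf⟩)]
  refine ⟨?_, ?_⟩
  · simpa [forall_mem_insert] using ⟨hxy, hM.1⟩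
  · rw [coe_insert, Set.pairwise_insert]
    exact ⟨hM.2, fun f hf _ => ⟨hfree f hf, fun w hwf hw => hfree f hf w hw hwf⟩⟩

lemma notMem_coveredVerts_erase (hM : G.IsEdgeMatching M) (hxy : s(x, y) ∈ M) :
    x ∉ coveredVerts (M.erase s(x, y)) := by
  rintro hx
  obtain ⟨e, he, hxe⟩ := mem_coveredVerts.1 hx
  exact ne_of_mem_erase he (hM.eq_of_mem (mem_of_mem_erase he) hxy hxe (Sym2.mem_mk_left x y))

/-- Replacing `xy` by `ux` and `vy` along the augmenting path `u x y v`. -/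
lemma exists_card_eq_add_one (hM : G.IsEdgeMatching M) (hxy : s(x, y) ∈ M) (hux : G.Adj u x)
    (hvy : G.Adj v y) (huv : u ≠ v) (hu : u ∉ coveredVerts M) (hv : v ∉ coveredVerts M) :
    ∃ N, G.IsEdgeMatching N ∧ #N = #M + 1 := by
  have hx : x ∈ coveredVerts M := mem_coveredVerts.2 ⟨_, hxy, Sym2.mem_mk_left x y⟩
  have hy : y ∈ coveredVerts M := mem_coveredVerts.2 ⟨_, hxy, Sym2.mem_mk_right x y⟩
  have hsub : coveredVerts (M.erase s(x, y)) ⊆ coveredVerts M :=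
    coveredVerts_mono (erase_subset _ _)
  have hx₀ := hM.notMem_coveredVerts_erase hxy
  have hy₀ : y ∉ coveredVerts (M.erase s(x, y)) := by
    rw [Sym2.eq_swap] at hxy ⊢
    exact hM.notMem_coveredVerts_erase hxy
  have hv₀ : v ∉ coveredVerts (M.erase s(x, y)) := fun h => hv (hsub h)
  have hM₁ := (hM.subset (erase_subset _ _)).insert hvy hv₀ hy₀
  have hu₁ : u ∉ coveredVerts (Insert.insert s(v, y) (M.erase s(x, y))) := by
    have : u ≠ y := fun h => hu (h ▸ hy)
    simpa [huv, this] using fun h => hu (hsub h)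
  have hx₁ : x ∉ coveredVerts (Insert.insert s(v, y) (M.erase s(x, y))) := by
    have : x ≠ v := fun h => hv (h ▸ hx)
    simpa [this, (hM.1 _ hxy).ne] using hx₀
  refine ⟨_, hM₁.insert hux hu₁ hx₁, ?_⟩
  rw [card_insert_of_notMem (mk_notMem_of_notMem_coveredVerts hu₁),
    card_insert_of_notMem (mk_notMem_of_notMem_coveredVerts hv₀), card_erase_add_one hxy]

lemma card_le_of_deleteEdges_incidenceSet (hxy : G.Adj x y)
    (hk : ∀ M, G.IsEdgeMatching M → #M ≤ k + 1)
    (hN : (G.deleteEdges (G.incidenceSet x ∪ G.incidenceSet y)).IsEdgeMatching N) : #N ≤ k := by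
  have hfree : ∀ z, z = x ∨ z = y → z ∉ coveredVerts N := by
    rintro z hz hzN
    obtain ⟨e, he, hze⟩ := mem_coveredVerts.1 hzN
    have he' := hN.1 e he
    rw [edgeSet_deleteEdges] at he'
    exact he'.2 (by rcases hz with rfl | rfl <;> simp [incidenceSet, he'.1, hze])
  have hx := hfree x (Or.inl rfl)
  have := hk _ ((hN.mono (deleteEdges_le _)).insert hxy hx (hfree y (Or.inr rfl)))
  rw [card_insert_of_notMem (mk_notMem_of_notMem_coveredVerts hx)] at this
  omega

variable [Fintype V] [DecidableRel G.Adj]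

lemma neighborFinset_subset_coveredVerts (hM : G.IsEdgeMatching M)
    (hmax : ∀ N, G.IsEdgeMatching N → #N ≤ #M) (hv : v ∉ coveredVerts M) :
    G.neighborFinset v ⊆ coveredVerts M := by
  intro w hw
  by_contra hw'
  have := hmax _ (hM.insert ((mem_neighborFinset _ _ _).1 hw) hv hw')
  rw [card_insert_of_notMem (mk_notMem_of_notMem_coveredVerts hv)] at this
  omega

/-- The partners of the neighbours of `u` avoid the neighbours of `v`: otherwise there is an
augmenting path of length three. -/
theorem degree_add_degree_le (hM : G.IsEdgeMatching M)
    (hmax : ∀ N, G.IsEdgeMatching N → #N ≤ #M) (huv : u ≠ v) (hu : u ∉ coveredVerts M)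
    (hv : v ∉ coveredVerts M) :
    G.degree u + G.degree v ≤ 2 * #M := by
  have hNu := hM.neighborFinset_subset_coveredVerts hmax hu
  have hNv := hM.neighborFinset_subset_coveredVerts hmax hv
  have hpartner : ∀ x ∈ coveredVerts M, ∃ y, s(x, y) ∈ M := by
    intro x hx
    obtain ⟨e, he, hxe⟩ := mem_coveredVerts.1 hx
    exact ⟨_, (Sym2.other_spec hxe).symm ▸ he⟩
  choose! p hp using hpartner
  have hinj : Set.InjOn p (coveredVerts M) := by
    intro x hx x' hx' hpx
    have h := hM.eq_of_mem (hp x hx) (hp x' hx') (Sym2.mem_mk_right _ _)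
      (hpx ▸ Sym2.mem_mk_right _ _)
    rwa [hpx, Sym2.congr_left] at h
  have hdisj : Disjoint ((G.neighborFinset u).image p) (G.neighborFinset v) := by
    rw [Finset.disjoint_left]
    rintro _ hy hvy
    obtain ⟨x, hux, rfl⟩ := mem_image.1 hy
    obtain ⟨N, hN, hcard⟩ := hM.exists_card_eq_add_one (hp x (hNu hux))
      ((mem_neighborFinset _ _ _).1 hux) ((mem_neighborFinset _ _ _).1 hvy) huv hu hv
    have := hmax N hN
    omega
  have hsub : (G.neighborFinset u).image p ∪ G.neighborFinset v ⊆ coveredVerts M := by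
    refine union_subset (image_subset_iff.2 fun x hx => ?_) hNv
    exact mem_coveredVerts.2 ⟨_, hp x (hNu hx), Sym2.mem_mk_right _ _⟩
  calc G.degree u + G.degree v = #((G.neighborFinset u).image p ∪ G.neighborFinset v) := by
        rw [card_union_of_disjoint hdisj, card_image_of_injOn (hinj.mono (coe_subset.2 hNu)),
          card_neighborFinset_eq_degree, card_neighborFinset_eq_degree]
    _ ≤ #(coveredVerts M) := card_le_card hsub
    _ ≤ 2 * #M := card_coveredVerts_le

end IsEdgeMatching

lemma support_deleteEdges_incidenceSet_subset [DecidableEq V] {W : Finset V}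
    (hW : G.support ⊆ W) :
    (G.deleteEdges (G.incidenceSet x ∪ G.incidenceSet y)).support ⊆ ↑(W \ {x, y}) := by
  intro a ha
  obtain ⟨b, hab⟩ := (mem_support _).1 ha
  simp only [deleteEdges_adj, Set.mem_union, mk'_mem_incidenceSet_iff] at hab
  simp only [coe_sdiff, Set.mem_sdiff, mem_coe, coe_insert, coe_singleton, Set.mem_insert_iff,
    Set.mem_singleton_iff]
  exact ⟨hW hab.1.mem_support_left, by tauto⟩

lemma exists_isEdgeMatching_forall_card_le [Fintype V] (G : SimpleGraph V) :
    ∃ M, G.IsEdgeMatching M ∧ ∀ N, G.IsEdgeMatching N → #N ≤ #M := by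
  classical
  obtain ⟨M, hM, hmax⟩ := exists_max_image ({M | G.IsEdgeMatching M} : Finset (Finset (Sym2 V)))
    card ⟨∅, by simpa using IsEdgeMatching.empty⟩
  exact ⟨M, (mem_filter.1 hM).2, fun N hN => hmax N (by simpa using hN)⟩

variable [Fintype V] [DecidableRel G.Adj]

lemma degree_lt_card_of_support_subset {W : Finset V} (hW : G.support ⊆ W) (hv : v ∈ W) :
    G.degree v < #W := by
  rw [← card_neighborFinset_eq_degree]
  refine card_lt_card ((ssubset_iff_of_subset fun w hw => ?_).2 ⟨v, hv, by simp⟩)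
  exact hW ((mem_neighborFinset _ _ _).1 hw).symm.mem_support_left

variable [DecidableEq V]

/-- At most one non-isolated vertex is missed by a maximum matching. -/
theorem card_support_le (hk : ∀ M, G.IsEdgeMatching M → #M ≤ k)
    (hdeg : ∀ v ∈ G.support, k + 1 ≤ G.degree v) : #G.support.toFinset ≤ 2 * k + 1 := by
  obtain ⟨M, hM, hmax⟩ := G.exists_isEdgeMatching_forall_card_le
  have hMk := hk M hM
  have hunmatched : #(G.support.toFinset \ coveredVerts M) ≤ 1 := by
    refine card_le_one.2 fun u hu v hv => by_contra fun huv => ?_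
    simp only [mem_sdiff, Set.mem_toFinset] at hu hv
    have := hM.degree_add_degree_le hmax huv hu.2 hv.2
    have := hdeg u hu.1
    have := hdeg v hv.1
    omega
  calc #G.support.toFinset ≤ #(G.support.toFinset \ coveredVerts M) + #(coveredVerts M) :=
        card_le_card_sdiff_add_card
    _ ≤ 2 * k + 1 := by have := card_coveredVerts_le (M := M); omega

lemma card_edgeFinset_le_choose_of_support_subset {W : Finset V} (hW : G.support ⊆ W) :
    #G.edgeFinset ≤ (#W).choose 2 := by
  calc #G.edgeFinset = #(G.induce (W : Set V)).edgeFinset := by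
        convert (card_edgeFinset_induce_of_support_subset hW).symm
    _ ≤ (Fintype.card (W : Set V)).choose 2 := card_edgeFinset_le_card_choose_two
    _ = (#W).choose 2 := by simp

lemma card_edgeFinset_le_card_sdiff_add (hxy : G.Adj x y) :
    #G.edgeFinset ≤ #(G.edgeFinset \ (G.incidenceFinset x ∪ G.incidenceFinset y)) +
      (G.degree x + G.degree y - 1) := by
  have hunion := card_union_add_card_inter (G.incidenceFinset x) (G.incidenceFinset y)
  have hinter : 0 < #(G.incidenceFinset x ∩ G.incidenceFinset y) :=
    card_pos.2 ⟨s(x, y), by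
      simpa [mk'_mem_incidenceSet_left_iff, mk'_mem_incidenceSet_right_iff]⟩
  have := card_le_card_sdiff_add_card (s := G.edgeFinset)
    (t := G.incidenceFinset x ∪ G.incidenceFinset y)
  rw [card_incidenceFinset_eq_degree, card_incidenceFinset_eq_degree] at hunion
  omega

theorem card_edgeFinset_le_choose_of_le_degree_add_degree {W : Finset V} (hW : G.support ⊆ W)
    (hk : ∀ M, G.IsEdgeMatching M → #M ≤ k)
    (hdeg : ∀ x y, G.Adj x y → #W + k ≤ G.degree x + G.degree y) :
    #G.edgeFinset ≤ (2 * k + 1).choose 2 := by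
  have hmin : ∀ v ∈ G.support, k + 1 ≤ G.degree v := by
    rintro v ⟨w, hvw⟩
    have := degree_lt_card_of_support_subset hW (hW hvw.symm.mem_support_left)
    have := hdeg v w hvw
    omega
  calc #G.edgeFinset ≤ (#G.support.toFinset).choose 2 :=
        card_edgeFinset_le_choose_of_support_subset (by simp)
    _ ≤ (2 * k + 1).choose 2 := Nat.choose_le_choose 2 (card_support_le hk hmin)

theorem card_edgeFinset_le_erdosGallaiBound {W : Finset V} (hW : G.support ⊆ W)
    (hn : 2 * k + 1 ≤ #W) (hk : ∀ M, G.IsEdgeMatching M → #M ≤ k) :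
    #G.edgeFinset ≤ erdosGallaiBound #W k := by
  induction k generalizing G W with
  | zero =>
    suffices G.edgeFinset = ∅ by simp [this]
    refine eq_empty_of_forall_notMem fun e he => ?_
    simpa using hk {e} (IsEdgeMatching.singleton (mem_edgeFinset.1 he))
  | succ j ih =>
    by_cases hlight : ∃ x y, G.Adj x y ∧ G.degree x + G.degree y ≤ #W + j
    · obtain ⟨x, y, hxy, hdeg⟩ := hlight
      classical
      let G' := G.deleteEdges (G.incidenceSet x ∪ G.incidenceSet y)
      have hE' : G'.edgeFinset = G.edgeFinset \ (G.incidenceFinset x ∪ G.incidenceFinset y) := by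
        ext e
        simp [G', edgeSet_deleteEdges]
      have hW' : #(W \ {x, y}) = #W - 2 := by
        have hxyW : {x, y} ⊆ W := by simpa [insert_subset_iff] using
          ⟨hW hxy.mem_support_left, hW hxy.symm.mem_support_left⟩
        rw [card_sdiff_of_subset hxyW, card_pair hxy.ne]
      have hIH := ih (G := G') (W := W \ {x, y}) (support_deleteEdges_incidenceSet_subset hW)
        (by omega) fun N hN => hN.card_le_of_deleteEdges_incidenceSet hxy hk
      calc #G.edgeFinset ≤ #G'.edgeFinset + (G.degree x + G.degree y - 1) :=
            hE' ▸ card_edgeFinset_le_card_sdiff_add hxy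
        _ ≤ erdosGallaiBound (#W - 2) j + (#W + j - 1) := by rw [← hW']; omega
        _ ≤ erdosGallaiBound #W (j + 1) := erdosGallaiBound_sub_two_add_le (by omega)
    · push Not at hlight
      refine (card_edgeFinset_le_choose_of_le_degree_add_degree hW hk fun x y hxy => ?_).trans
        (le_max_left _ _)
      have := hlight x y hxy
      omega

end SimpleGraph

theorem stmt2_general {V : Type*} [Fintype V] (n k : ℕ) (hn : Fintype.card V = n)
    (hnk : 2 * k + 1 ≤ n) (G : SimpleGraph V) [DecidableRel G.Adj]
    (hM : ¬ ∃ M : Finset (Sym2 V), M.card = k + 1 ∧ (∀ e ∈ M, e ∈ G.edgeSet) ∧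
      (M : Set (Sym2 V)).Pairwise (fun e f => ∀ v, v ∈ e → v ∉ f)) :
    G.edgeFinset.card ≤ max ((2 * k + 1).choose 2) ((k + 1).choose 2 + (n - k - 1) * k) := by
  classical
  subst hn
  exact SimpleGraph.card_edgeFinset_le_erdosGallaiBound (W := univ) (by simp) hnk
    fun _ => SimpleGraph.IsEdgeMatching.card_le hM

theorem stmt2 {V : Type*} [Fintype V] [DecidableEq V] (n k : ℕ) (hn : Fintype.card V = n)
    (hnk : 2 * k + 1 ≤ n) (G : SimpleGraph V) [DecidableRel G.Adj]
    (hM : ¬ ∃ M : Finset (Sym2 V), M.card = k + 1 ∧ (∀ e ∈ M, e ∈ G.edgeSet) ∧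
      (M : Set (Sym2 V)).Pairwise (fun e f => ∀ v, v ∈ e → v ∉ f)) :
    G.edgeFinset.card ≤ max ((2 * k + 1).choose 2) ((k + 1).choose 2 + (n - k - 1) * k) :=
  stmt2_general n k hn hnk G hM
end

section
/- For integers k, q, r with k ≥ 2q+3, q ≥ 0, and 3 ≤ r ≤ k−q−1, and any integer γ with 0 ≤ γ ≤ k−q−1 and any integer t with γ ≤ t ≤ k, we have C(γ, r−1) + t − γ ≤ C(k−q, r−1) − 1. -/
/-!
Put `m = k - q` and `s = r - 1`, and bound `t - γ` by `k - γ`. Since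
`C(γ + 1, s) + (n - γ - 1) - (C(γ, s) + (n - γ)) = C(γ, s - 1) - 1` is `-1` for `γ < s - 1` and
nonnegative afterwards, `γ ↦ C(γ, s) + (n - γ)` is maximal at an endpoint of `[0, n]`. With
`n = m - 1` the claim then follows from Pascal's rule `C(m, s) = C(m - 1, s) + C(m - 1, s - 1)`
together with `m - 1 ≤ C(m - 1, j)` for `0 < j < m - 1`.
-/

namespace Nat

lemma self_le_choose {n j : ℕ} (hj : 0 < j) (hjn : j < n) : n ≤ n.choose j := by
  induction n generalizing j with
  | zero => omega
  | succ n ih =>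
    obtain ⟨i, rfl⟩ : ∃ i, j = i + 1 := ⟨j - 1, by omega⟩
    rcases Nat.lt_or_ge (i + 1) n with hin | hin
    · have hpos : 0 < n.choose i := Nat.choose_pos (by omega)
      have := ih hj hin
      rw [Nat.choose_succ_succ']
      omega
    · obtain rfl : n = i + 1 := by omega
      rw [Nat.choose_succ_self_right]

lemma choose_add_sub_le_max {n s γ : ℕ} (hs : 0 < s) (hγ : γ ≤ n) :
    γ.choose s + (n - γ) ≤ max n (n.choose s) := by
  induction n with
  | zero => simp [Nat.le_zero.mp hγ, Nat.choose_eq_zero_of_lt hs]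
  | succ n ih =>
    rcases Nat.eq_or_lt_of_le hγ with rfl | hγn
    · simp
    have hstep : n.choose s + 1 ≤ max (n + 1) ((n + 1).choose s) := by
      rcases Nat.lt_or_ge n (s - 1) with hsn | hsn
      · rw [Nat.choose_eq_zero_of_lt (by omega)]
        omega
      · obtain ⟨i, rfl⟩ : ∃ i, s = i + 1 := ⟨s - 1, by omega⟩
        have hpos : 0 < n.choose i := Nat.choose_pos (by omega)
        rw [Nat.choose_succ_succ']
        omega
    have := ih (by omega)
    omega

end Nat

theorem stmt3_general (k q r γ t : ℕ) (hk : 2 * q + 3 ≤ k) (hr : 3 ≤ r) (hrk : r ≤ k - q - 1)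
    (hγ : γ ≤ k - q - 1) (htk : t ≤ k) :
    γ.choose (r - 1) + (t - γ) ≤ (k - q).choose (r - 1) - 1 := by
  set n := k - q - 1
  obtain ⟨s, hs⟩ : ∃ s, r - 1 = s + 1 := ⟨r - 2, by omega⟩
  rw [show k - q = n + 1 by omega, hs, Nat.choose_succ_succ']
  have hn_le_left : n ≤ n.choose s := Nat.self_le_choose (by omega) (by omega)
  have hn_le_right : n ≤ n.choose (s + 1) := Nat.self_le_choose (by omega) (by omega)
  have hendpoint := Nat.choose_add_sub_le_max (s := s + 1) s.succ_pos hγ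
  rw [max_eq_right hn_le_right] at hendpoint
  omega

theorem stmt3 (k q r γ t : ℕ) (hk : 2 * q + 3 ≤ k) (hr : 3 ≤ r) (hrk : r ≤ k - q - 1)
    (hγ : γ ≤ k - q - 1) (hγt : γ ≤ t) (htk : t ≤ k) :
    γ.choose (r - 1) + (t - γ) ≤ (k - q).choose (r - 1) - 1 :=
  stmt3_general k q r γ t hk hr hrk hγ htk
end

section
/- Fix integers n, k, r with r ≤ k−1 and n ≥ 2k+2, and define h(t) = C(2k+1−t, r) + (n−2k−1+t)·C(t, r−1) for 0 ≤ t ≤ k. Then for every t with 1 ≤ t ≤ k−1, h(t) ≤ max{h(0), h(k)} (convexity of h in t). -/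
/-!
Both summands of `h` are convex in `t`. For `C(2k + 1 - t, r)` this is Pascal's rule: the first difference
of `a ↦ C(a, s + 1)` is `C(a, s)`, which is nondecreasing in `a`. For `(m + t) C(t, s)`, Pascal's rule reduces
the second difference to `(m + t + 2) C(t + 1, s - 1) - (m + t) C(t, s - 1) ≥ 0`. A convex sequence that
increases at some step keeps increasing afterwards, so on an interval it is bounded by its endpoint values.
-/

open Set

def DiscreteConvexOn {α : Type*} [AddCommMonoid α] [LE α] (f : ℕ → α) (a b : ℕ) : Prop :=
  ∀ i, a ≤ i → i + 2 ≤ b → 2 • f (i + 1) ≤ f i + f (i + 2)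

namespace DiscreteConvexOn

theorem mono {α : Type*} [AddCommMonoid α] [LE α] {f : ℕ → α} {a b a' b' : ℕ}
    (hf : DiscreteConvexOn f a b) (ha : a ≤ a') (hb : b' ≤ b) : DiscreteConvexOn f a' b' :=
  fun i hi hib => hf i (ha.trans hi) (hib.trans hb)

section
variable {α : Type*} [AddCommMonoid α] [PartialOrder α] [IsOrderedAddMonoid α]
  {f g : ℕ → α} {a b : ℕ}

theorem add (hf : DiscreteConvexOn f a b) (hg : DiscreteConvexOn g a b) :
    DiscreteConvexOn (fun i => f i + g i) a b := by
  intro i hai hib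
  rw [smul_add]
  calc 2 • f (i + 1) + 2 • g (i + 1) ≤ (f i + f (i + 2)) + (g i + g (i + 2)) :=
        add_le_add (hf i hai hib) (hg i hai hib)
    _ = f i + g i + (f (i + 2) + g (i + 2)) := add_add_add_comm _ _ _ _

end

section
variable {α : Type*} [AddCommMonoid α] [LinearOrder α] [IsOrderedCancelAddMonoid α]
  {f : ℕ → α} {a b t : ℕ}

theorem monotoneOn_Icc_of_le_succ (hf : DiscreteConvexOn f a b) (hat : a ≤ t)
    (hstep : f t ≤ f (t + 1)) : MonotoneOn f (Icc t b) := by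
  have hsteps : ∀ j, t ≤ j → j + 1 ≤ b → f j ≤ f (j + 1) := by
    intro j htj
    induction j, htj using Nat.le_induction with
    | base => exact fun _ => hstep
    | succ j htj ih =>
      intro hjb
      refine le_of_add_le_add_left (a := f (j + 1)) ?_
      calc f (j + 1) + f (j + 1) = 2 • f (j + 1) := (two_nsmul _).symm
        _ ≤ f j + f (j + 2) := hf j (hat.trans htj) hjb
        _ ≤ f (j + 1) + f (j + 1 + 1) := add_le_add_left (ih (by omega)) _
  exact monotoneOn_of_le_add_one ordConnected_Icc fun j _ hj hj1 => hsteps j hj.1 hj1.2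

theorem le_max (hf : DiscreteConvexOn f a b) (hat : a ≤ t) (htb : t ≤ b) :
    f t ≤ max (f a) (f b) := by
  obtain rfl | htb := htb.eq_or_lt
  · exact le_max_right _ _
  by_cases hstep : f t ≤ f (t + 1)
  · exact le_max_of_le_right <|
      hf.monotoneOn_Icc_of_le_succ hat hstep ⟨le_rfl, htb.le⟩ ⟨htb.le, le_rfl⟩ htb.le
  -- once `f` increases at some step `j ≥ a`, it keeps increasing, contradicting `hstep`
  have hanti : AntitoneOn f (Icc a t) := by
    refine antitoneOn_of_add_one_le ordConnected_Icc fun j _ hj hj1 => ?_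
    by_contra! hj_up
    exact hstep <| hf.monotoneOn_Icc_of_le_succ hj.1 hj_up.le
      ⟨hj.2, htb.le⟩ ⟨hj.2.trans (Nat.le_succ t), htb⟩ (Nat.le_succ t)
  exact le_max_of_le_left <| hanti ⟨le_rfl, hat⟩ ⟨hat, le_rfl⟩ hat

end

end DiscreteConvexOn

theorem Nat.two_mul_choose_succ_le (a r : ℕ) :
    2 * (a + 1).choose r ≤ a.choose r + (a + 2).choose r := by
  cases r with
  | zero => simp
  | succ s =>
    have h₁ : (a + 2).choose (s + 1) = (a + 1).choose s + (a + 1).choose (s + 1) :=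
      Nat.choose_succ_succ' (a + 1) s
    have h₂ := Nat.choose_succ_succ' a s
    have h₃ := Nat.choose_le_choose s (Nat.le_add_right a 1)
    omega

theorem discreteConvexOn_choose_sub (c r : ℕ) :
    DiscreteConvexOn (fun t => (c - t).choose r) 0 c := by
  intro i _ hic
  obtain ⟨d, rfl⟩ := Nat.exists_eq_add_of_le hic
  have hsub₀ : i + 2 + d - i = d + 2 := by omega
  have hsub₁ : i + 2 + d - (i + 1) = d + 1 := by omega
  have hsub₂ : i + 2 + d - (i + 2) = d := by omega
  simp only [smul_eq_mul, hsub₀, hsub₁, hsub₂]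
  linarith [Nat.two_mul_choose_succ_le d r]

theorem discreteConvexOn_add_mul_choose (m s a b : ℕ) :
    DiscreteConvexOn (fun t => (m + t) * t.choose s) a b := by
  intro t _ _
  simp only [smul_eq_mul]
  cases s with
  | zero => simp only [Nat.choose_zero_right]; omega
  | succ u =>
    rw [Nat.choose_succ_succ' t u, Nat.choose_succ_succ' (t + 1) u, Nat.choose_succ_succ' t u]
    have key : (m + t) * t.choose u ≤ (m + (t + 2)) * (t + 1).choose u :=
      Nat.mul_le_mul (by omega) (Nat.choose_le_choose u (Nat.le_succ t))
    nlinarith [key]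

theorem stmt5_general (n k r : ℕ)
    (t : ℕ) (htk : t ≤ k - 1) :
    (2 * k + 1 - t).choose r + (n - (2 * k + 1) + t) * t.choose (r - 1) ≤
      max ((2 * k + 1).choose r + (n - (2 * k + 1)) * Nat.choose 0 (r - 1))
          ((k + 1).choose r + (n - (2 * k + 1) + k) * k.choose (r - 1)) := by
  have hconv : DiscreteConvexOn
      (fun t => (2 * k + 1 - t).choose r + (n - (2 * k + 1) + t) * t.choose (r - 1)) 0 k :=
    ((discreteConvexOn_choose_sub _ r).mono le_rfl (by omega)).add
      (discreteConvexOn_add_mul_choose _ _ _ _)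
  have hk : 2 * k + 1 - k = k + 1 := by omega
  simpa only [Nat.sub_zero, Nat.add_zero, hk] using hconv.le_max (Nat.zero_le t) (by omega)

theorem stmt5 (n k r : ℕ) (hrk : r ≤ k - 1) (hn : 2 * k + 2 ≤ n)
    (t : ℕ) (ht1 : 1 ≤ t) (htk : t ≤ k - 1) :
    (2 * k + 1 - t).choose r + (n - (2 * k + 1) + t) * t.choose (r - 1) ≤
      max ((2 * k + 1).choose r + (n - (2 * k + 1)) * Nat.choose 0 (r - 1))
          ((k + 1).choose r + (n - (2 * k + 1) + k) * k.choose (r - 1)) :=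
  stmt5_general n k r t htk
end

section
/- Let r ≥ 2 and let G be a red–blue edge-colored complete graph K_n. Then e(G_red) + N(K_r, G_blue) ≤ max{C(n,2), C(n,r)}, where G_red is the graph of red edges, G_blue the graph of blue edges, and N(K_r, G_blue) is the number of r-cliques in G_blue. -/
/-!
The blue `r`-cliques are the independent `r`-sets of the red graph `R`. Each red edge lies in
`C(n-2, r-2)` of the `r`-sets, none of them independent, while each `r`-set contains at most
`C(r, 2)` red edges. When `C(r, 2) ≤ C(n-2, r-2)`, i.e. `r = 2` or `n ≥ r + 2`, double counting
gives at most as many red edges as non-independent `r`-sets, so the sum is at most `C(n, r)`.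

Otherwise `r ≥ 3` and `n ≤ r + 1`. One independent `r`-set already forces a missing red edge.
Two of them force `n = r + 1`; their complements `{x}` and `{y}` then meet every red edge, so the
only possible red edge is `xy`, and the sum is at most `1 + n ≤ C(n, 2)`.
-/

open Finset

namespace SimpleGraph

lemma IsIndepSet.not_toFinset_subset {V : Type*} [DecidableEq V] {R : SimpleGraph V}
    {s : Finset V} (hs : R.IsIndepSet s) {e : Sym2 V} (he : e ∈ R.edgeSet) :
    ¬ e.toFinset ⊆ s := fun hsub => by
  obtain ⟨v, hvs, hve⟩ := IsIndepSet.nonempty_mem_compl_mem_edge R hs he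
  exact hvs (hsub (Sym2.mem_toFinset.2 hve))

variable {V : Type*} [Fintype V] [DecidableEq V] (R : SimpleGraph V) [DecidableRel R.Adj]

lemma ncard_setOf_isClique_compl (r : ℕ) :
    {s : Finset V | s.card = r ∧ Rᶜ.IsClique (↑s : Set V)}.ncard = #(R.indepSetFinset r) := by
  rw [← Set.ncard_coe_finset]
  congr 1
  ext s
  simp [isNIndepSet_iff, and_comm]

lemma indepSetFinset_subset_powersetCard (r : ℕ) : R.indepSetFinset r ⊆ univ.powersetCard r :=
  fun s hs => mem_powersetCard.2 ⟨subset_univ s, (mem_indepSetFinset_iff.1 hs).card_eq⟩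

lemma card_indepSetFinset_le_choose (r : ℕ) :
    #(R.indepSetFinset r) ≤ (Fintype.card V).choose r := by
  simpa using card_le_card (R.indepSetFinset_subset_powersetCard r)

lemma card_edgeFinset_mul_choose_le {r : ℕ} (hr : 2 ≤ r) :
    #R.edgeFinset * (Fintype.card V - 2).choose (r - 2) ≤
      #(univ.powersetCard r \ R.indepSetFinset r) * r.choose 2 := by
  refine card_mul_le_card_mul (fun e S => e.toFinset ⊆ S) (fun e he => ?_) (fun S hS => ?_)
  · rw [mem_edgeFinset] at he
    have hcard : #e.toFinset = 2 :=
      Sym2.card_toFinset_of_not_isDiag e (R.not_isDiag_of_mem_edgeSet he)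
    rw [← hcard, ← card_univ, ← card_filter_powersetCard_subset _ _ _ (subset_univ _) (hcard ▸ hr)]
    refine card_le_card fun S hS => ?_
    simp only [mem_filter, mem_powersetCard] at hS
    simp only [bipartiteAbove, mem_filter, mem_sdiff, mem_powersetCard, mem_indepSetFinset_iff,
      isNIndepSet_iff, not_and]
    exact ⟨⟨hS.1, fun hind => absurd hS.2 (hind.not_toFinset_subset he)⟩, hS.2⟩
  · rw [mem_sdiff, mem_powersetCard] at hS
    rw [← hS.1.2, ← Sym2.card_image_offDiag]
    refine card_le_card fun e he => ?_
    rw [mem_bipartiteBelow, mem_edgeFinset] at he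
    induction e with
    | h a b =>
      simp only [mem_image, mem_offDiag, Prod.exists, Function.uncurry_apply_pair]
      exact ⟨a, b, ⟨he.2 (Sym2.mem_toFinset.2 (Sym2.mem_mk_left a b)),
        he.2 (Sym2.mem_toFinset.2 (Sym2.mem_mk_right a b)), he.1.ne⟩, rfl⟩

lemma card_edgeFinset_add_card_indepSetFinset_le_choose {r : ℕ} (hr : 2 ≤ r)
    (hV : r = 2 ∨ r + 2 ≤ Fintype.card V) :
    #R.edgeFinset + #(R.indepSetFinset r) ≤ (Fintype.card V).choose r := by
  have hchoose : r.choose 2 ≤ (Fintype.card V - 2).choose (r - 2) := by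
    rcases hV with rfl | hV
    · simp
    · rw [← Nat.choose_symm_of_eq_add (by omega : r = r - 2 + 2)]
      exact Nat.choose_le_choose _ (by omega)
  have hpos : 0 < (Fintype.card V - 2).choose (r - 2) :=
    lt_of_lt_of_le (Nat.choose_pos hr) hchoose
  have hred : #R.edgeFinset ≤ #(univ.powersetCard r \ R.indepSetFinset r) :=
    Nat.le_of_mul_le_mul_right ((R.card_edgeFinset_mul_choose_le hr).trans
      (Nat.mul_le_mul_left _ hchoose)) hpos
  have hsplit : #(univ.powersetCard r \ R.indepSetFinset r) + #(R.indepSetFinset r) =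
      (Fintype.card V).choose r := by
    rw [card_sdiff_add_card_eq_card (R.indepSetFinset_subset_powersetCard r), card_powersetCard,
      card_univ]
  omega

lemma card_edgeFinset_lt_choose_two_of_nonempty {r : ℕ} (hr : 2 ≤ r)
    (h : (R.indepSetFinset r).Nonempty) :
    #R.edgeFinset < (Fintype.card V).choose 2 := by
  obtain ⟨s, hs⟩ := h
  rw [mem_indepSetFinset_iff, isNIndepSet_iff] at hs
  obtain ⟨a, ha, b, hb, hab⟩ := one_lt_card.1 (hs.2 ▸ hr)
  rw [← card_edgeFinset_top_eq_card_choose_two]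
  refine card_lt_card (edgeFinset_ssubset_edgeFinset.2 (lt_top_iff_ne_top.2 fun htop => ?_))
  exact hs.1 ha hb hab (htop ▸ hab)

lemma card_edgeFinset_le_one_of_one_lt_card {r : ℕ} (hV : Fintype.card V = r + 1)
    (h : 1 < #(R.indepSetFinset r)) : #R.edgeFinset ≤ 1 := by
  have hcover : ∀ S ∈ R.indepSetFinset r, ∃ x, Sᶜ = {x} ∧ ∀ e ∈ R.edgeSet, x ∈ e := by
    intro S hS
    rw [mem_indepSetFinset_iff, isNIndepSet_iff] at hS
    obtain ⟨x, hx⟩ := card_eq_one.1 (by rw [card_compl, hS.2]; omega : #Sᶜ = 1)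
    refine ⟨x, hx, fun e he => ?_⟩
    obtain ⟨v, hvS, hve⟩ := IsIndepSet.nonempty_mem_compl_mem_edge R hS.1 he
    rwa [← mem_singleton.1 (hx ▸ mem_compl.2 hvS : v ∈ ({x} : Finset V))]
  obtain ⟨S, hS, T, hT, hST⟩ := one_lt_card.1 h
  obtain ⟨x, hSx, hx⟩ := hcover S hS
  obtain ⟨y, hTy, hy⟩ := hcover T hT
  have hxy : x ≠ y := fun hxy => hST (compl_injective (hSx.trans (hxy ▸ hTy.symm)))
  have hedge : ∀ e ∈ R.edgeFinset, e = s(x, y) := fun e he =>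
    (Sym2.mem_and_mem_iff hxy).1 ⟨hx e (mem_edgeFinset.1 he), hy e (mem_edgeFinset.1 he)⟩
  exact card_le_one.2 fun e he e' he' => (hedge e he).trans (hedge e' he').symm

lemma card_edgeFinset_add_card_indepSetFinset_le_choose_two {r : ℕ} (hr : 3 ≤ r)
    (hV : Fintype.card V ≤ r + 1) :
    #R.edgeFinset + #(R.indepSetFinset r) ≤ (Fintype.card V).choose 2 := by
  rcases le_or_gt #(R.indepSetFinset r) 1 with hle | hlt
  · rcases (R.indepSetFinset r).eq_empty_or_nonempty with hempty | hne
    · simpa [hempty] using card_edgeFinset_le_card_choose_two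
    · have := R.card_edgeFinset_lt_choose_two_of_nonempty (by omega) hne
      omega
  have hcard : Fintype.card V = r + 1 := by
    refine le_antisymm hV (Nat.succ_le_of_lt (lt_of_not_ge fun hle => ?_))
    have hchoose : (Fintype.card V).choose r ≤ 1 := by
      rcases hle.lt_or_eq with hlt | heq
      · simp [Nat.choose_eq_zero_of_lt hlt]
      · simp [heq]
    have := R.card_indepSetFinset_le_choose r
    omega
  have hred := R.card_edgeFinset_le_one_of_one_lt_card hcard hlt
  have hindep := R.card_indepSetFinset_le_choose r
  have hchoose : r + 2 ≤ (r + 1).choose 2 := by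
    have : 3 ≤ r.choose 2 := Nat.choose_le_choose 2 hr
    rw [Nat.choose_succ_succ' r 1, Nat.choose_one_right]
    exact Nat.add_le_add_left ((by norm_num : 2 ≤ 3).trans this) r
  rw [hcard, Nat.choose_succ_self_right] at hindep
  rw [hcard]
  omega

end SimpleGraph

open SimpleGraph in
theorem stmt9 {V : Type*} [Fintype V] [DecidableEq V] (n r : ℕ) (hn : Fintype.card V = n)
    (hr : 2 ≤ r) (R : SimpleGraph V) [DecidableRel R.Adj] :
    R.edgeFinset.card + {s : Finset V | s.card = r ∧ Rᶜ.IsClique (↑s : Set V)}.ncard ≤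
      max (n.choose 2) (n.choose r) := by
  subst hn
  rw [ncard_setOf_isClique_compl]
  by_cases hV : r = 2 ∨ r + 2 ≤ Fintype.card V
  · exact le_max_of_le_right (R.card_edgeFinset_add_card_indepSetFinset_le_choose hr hV)
  · exact le_max_of_le_left
      (R.card_edgeFinset_add_card_indepSetFinset_le_choose_two (by omega) (by omega))
end

section
/- Let F be a graph and let H be an r-uniform hypergraph containing no Berge-F. Then there exists an F-free graph G on V(H), a red–blue edge-coloring of G, and an injection from E(G_red) into E(H), such that every hyperedge of H not in the image of this injection is an r-clique of G_blue. Consequently |E(H)| ≤ e(G_red) + N(K_r, G_blue). -/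
/-!
Join every hyperedge to the pairs of vertices it contains and pick a subfamily `B ⊆ H` of
maximal deficiency `#B - #∂B`, where `∂B` is the set of pairs covered by `B`. Maximality gives
Hall's condition twice: the hyperedges outside `B` can be matched to distinct pairs outside `∂B`
(the red edges), and the pairs of `∂B` (the blue edges) to distinct hyperedges of `B`. Together
the two matchings send the edges of `G = red ∪ blue` injectively to hyperedges containing them,
so a copy of `F` in `G` would be a Berge-`F` in `H`; and every hyperedge of `B` is a blue clique.
-/

open Finset Function

namespace Finset

variable {ι α : Type*} [DecidableEq ι] [DecidableEq α]

theorem exists_injective_of_forall_subset_card_le {s : Finset ι} {t : ι → Finset α}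
    (h : ∀ x ⊆ s, #x ≤ #(x.biUnion t)) : ∃ f : s → α, Injective f ∧ ∀ i : s, f i ∈ t i := by
  refine (all_card_le_biUnion_card_iff_exists_injective _).1 fun x => ?_
  have hx := h (x.image Subtype.val) (image_subset_iff.2 fun i _ => i.2)
  rwa [card_image_of_injective _ Subtype.val_injective, image_biUnion] at hx

theorem exists_hall_decomposition (s : Finset ι) (t : ι → Finset α) :
    ∃ u ⊆ s, (∃ f : ↥(s \ u) → α, Injective f ∧ ∀ i : ↥(s \ u), f i ∈ t i \ u.biUnion t) ∧
      ∃ g : ↥(u.biUnion t) → ι, Injective g ∧ ∀ a, g a ∈ u ∧ ↑a ∈ t (g a) := by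
  obtain ⟨u, hu, hmax⟩ := exists_max_image s.powerset
    (fun u => (#u : ℤ) - #(u.biUnion t)) ⟨∅, empty_mem_powerset s⟩
  rw [mem_powerset] at hu
  refine ⟨u, hu, ?_, ?_⟩
  · refine exists_injective_of_forall_subset_card_le (t := fun i => t i \ u.biUnion t)
      fun x hx => ?_
    have hxu : Disjoint u x := disjoint_sdiff.mono_right hx
    have hdef := hmax (u ∪ x) (mem_powerset.2 (union_subset hu (hx.trans sdiff_subset)))
    rw [card_union_of_disjoint hxu, union_biUnion, union_comm, ← card_sdiff_add_card] at hdef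
    have hsub : x.biUnion t \ u.biUnion t ⊆ x.biUnion fun i => t i \ u.biUnion t := by
      intro a
      simp only [mem_sdiff, mem_biUnion]
      grind
    have := card_le_card hsub
    push_cast at hdef
    omega
  · suffices ∃ g : ↥(u.biUnion t) → ι, Injective g ∧ ∀ a, g a ∈ u.filter (↑a ∈ t ·) from
      this.imp fun g ⟨hg, hgt⟩ => ⟨hg, fun a => mem_filter.1 (hgt a)⟩
    refine exists_injective_of_forall_subset_card_le (t := fun a => u.filter (a ∈ t ·))
      fun q hq => ?_
    set v := q.biUnion fun a => u.filter (a ∈ t ·)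
    have hvu : v ⊆ u := biUnion_subset.2 fun _ _ => filter_subset _ _
    have hsub : (u \ v).biUnion t ⊆ u.biUnion t \ q := by
      intro a
      simp only [v, mem_sdiff, mem_biUnion, mem_filter]
      grind
    have hdef := hmax (u \ v) (mem_powerset.2 (sdiff_subset.trans hu))
    have := card_le_card hsub
    rw [card_sdiff_of_subset hvu] at hdef
    rw [card_sdiff_of_subset hq] at this
    have := card_le_card hvu
    have := card_le_card hq
    push_cast [*] at hdef
    omega

end Finset

namespace SimpleGraph

variable {V W β : Type*}

def cliqueEdges [DecidableEq V] (h : Finset V) : Finset (Sym2 V) := h.sym2.filter (¬ ·.IsDiag)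

def IsBergeCover (G : SimpleGraph V) (H : Finset (Finset V)) (τ : Sym2 V → Finset V) : Prop :=
  Set.InjOn τ G.edgeSet ∧ ∀ e ∈ G.edgeSet, τ e ∈ H ∧ e ∈ (τ e).sym2

def HasBergeCopy (H : Finset (Finset V)) (F : SimpleGraph W) : Prop :=
  ∃ (ψ : W → V) (φ : F.edgeSet → Finset V), Injective ψ ∧ Injective φ ∧
    ∀ e : F.edgeSet, φ e ∈ H ∧ ∀ v ∈ (e : Sym2 W), ψ v ∈ φ e

namespace IsBergeCover

variable {G R K : SimpleGraph V} {H H₁ H₂ : Finset (Finset V)} {τ τ₁ τ₂ : Sym2 V → Finset V}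

theorem hasBergeCopy (hτ : G.IsBergeCover H τ) {F : SimpleGraph W} (hF : F ⊑ G) :
    HasBergeCopy H F := by
  obtain ⟨f⟩ := hF
  have hfe (e : F.edgeSet) := hτ.2 _ (f.mapEdgeSet e).2
  refine ⟨f, fun e => τ (f.mapEdgeSet e), f.injective,
    fun e₁ e₂ h => f.mapEdgeSet.injective
      (Subtype.ext (hτ.1 (f.mapEdgeSet e₁).2 (f.mapEdgeSet e₂).2 h)),
    fun e => ⟨(hfe e).1, fun v hv => ?_⟩⟩
  exact mem_sym2_iff.1 (hfe e).2 _ (Sym2.mem_map.2 ⟨v, hv, rfl⟩)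

theorem sup [DecidableEq (Finset V)] [DecidablePred (· ∈ R.edgeSet)]
    (hR : R.IsBergeCover H₁ τ₁) (hK : K.IsBergeCover H₂ τ₂) (hH : Disjoint H₁ H₂) :
    (R ⊔ K).IsBergeCover (H₁ ∪ H₂) (R.edgeSet.piecewise τ₁ τ₂) := by
  have h₁ : Set.EqOn (R.edgeSet.piecewise τ₁ τ₂) τ₁ R.edgeSet :=
    fun e he => Set.piecewise_eq_of_mem _ _ _ he
  have h₂ : Set.EqOn (R.edgeSet.piecewise τ₁ τ₂) τ₂ (K.edgeSet \ R.edgeSet) :=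
    fun e he => Set.piecewise_eq_of_notMem _ _ _ he.2
  rw [IsBergeCover, edgeSet_sup, ← Set.union_sdiff_self]
  refine ⟨(Set.injOn_union Set.disjoint_sdiff_right).2 ⟨hR.1.congr h₁.symm,
    (hK.1.mono Set.sdiff_subset).congr h₂.symm, fun e he e' he' => ?_⟩, ?_⟩
  · rw [h₁ he, h₂ he']
    exact ne_of_mem_of_not_mem (hR.2 e he).1 (Finset.disjoint_left.1 hH.symm (hK.2 e' he'.1).1)
  · rintro e (he | he)
    · rw [h₁ he]
      exact (hR.2 e he).imp_left (mem_union_left _)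
    · rw [h₂ he]
      exact (hK.2 e he.1).imp_left (mem_union_right _)

end IsBergeCover

theorem isBergeCover_extend {G : SimpleGraph V} {H : Finset (Finset V)} {P : Set (Sym2 V)}
    (σ : P → Finset V) (hσ : Injective σ) (hσH : ∀ e, σ e ∈ H ∧ ↑e ∈ (σ e).sym2)
    (hG : G.edgeSet ⊆ P) : G.IsBergeCover H (extend Subtype.val σ fun _ => ∅) := by
  have hext (e) (he : e ∈ P) : extend Subtype.val σ (fun _ => ∅) e = σ ⟨e, he⟩ :=
    Subtype.val_injective.extend_apply σ _ ⟨e, he⟩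
  refine ⟨fun e₁ h₁ e₂ h₂ h => ?_, fun e he => hext e (hG he) ▸ hσH _⟩
  rw [hext _ (hG h₁), hext _ (hG h₂)] at h
  exact congrArg Subtype.val (hσ h)

theorem exists_red_blue_decomposition (H : Finset (Finset V)) :
    ∃ (R K : SimpleGraph V) (τ : Sym2 V → Finset V), Disjoint R K ∧ (R ⊔ K).IsBergeCover H τ ∧
      ∀ h ∈ H, (∀ e ∈ R.edgeSet, τ e ≠ h) → K.IsClique (h : Set V) := by
  classical
  obtain ⟨B, hBH, ⟨j, hj, hjB⟩, σ, hσ, hσB⟩ := exists_hall_decomposition H cliqueEdges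
  have hjx (x) := mem_sdiff.1 (hjB x)
  let R := fromEdgeSet (Set.range j)
  let K := fromEdgeSet (B.biUnion cliqueEdges : Set (Sym2 V))
  let ρ : Set.range j → Finset V := fun e => ((Equiv.ofInjective j hj).symm e).1
  have hρ (x) : ρ ⟨j x, x, rfl⟩ = x := congrArg Subtype.val (Equiv.ofInjective_symm_apply hj x)
  have hR : R.IsBergeCover (H \ B) (extend Subtype.val ρ fun _ => ∅) := by
    refine isBergeCover_extend ρ (Subtype.val_injective.comp (Equiv.injective _)) ?_
      (edgeSet_fromEdgeSet _ ▸ Set.sdiff_subset)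
    rintro ⟨_, x, rfl⟩
    rw [hρ]
    exact ⟨x.2, (mem_filter.1 (hjx x).1).1⟩
  have hK : K.IsBergeCover B (extend Subtype.val σ fun _ => ∅) :=
    isBergeCover_extend σ hσ (fun e => (hσB e).imp_right fun he => (mem_filter.1 he).1)
      (edgeSet_fromEdgeSet _ ▸ Set.sdiff_subset)
  refine ⟨R, K, _, ?_, sdiff_union_of_subset hBH ▸ hR.sup hK sdiff_disjoint, ?_⟩
  · rw [← disjoint_edgeSet, edgeSet_fromEdgeSet, edgeSet_fromEdgeSet]
    refine Set.disjoint_left.2 ?_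
    rintro _ ⟨⟨x, rfl⟩, -⟩ ⟨hx, -⟩
    exact (hjx x).2 hx
  · intro h hh hne
    have hB : h ∈ B := by
      by_contra hB
      let x : ↥(H \ B) := ⟨h, mem_sdiff.2 ⟨hh, hB⟩⟩
      have hx : j x ∈ R.edgeSet := by
        rw [edgeSet_fromEdgeSet]
        exact ⟨⟨x, rfl⟩, (mem_filter.1 (hjx x).1).2⟩
      apply hne _ hx
      rw [Set.piecewise_eq_of_mem _ _ _ hx,
        Subtype.val_injective.extend_apply ρ _ ⟨j x, x, rfl⟩, hρ]
    intro u hu v hv huv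
    rw [fromEdgeSet_adj]
    exact ⟨mem_biUnion.2 ⟨h, hB, mem_filter.2 ⟨mk_mem_sym2_iff.2 ⟨hu, hv⟩, huv⟩⟩, huv⟩

theorem card_le_ncard_add_ncard_isClique [Finite V] {H : Finset (Finset V)} {r : ℕ}
    {K : SimpleGraph V} {E : Set β} (τ : β → Finset V) (hE : E.Finite) (hH : ∀ h ∈ H, #h = r)
    (hK : ∀ h ∈ H, (∀ e ∈ E, τ e ≠ h) → K.IsClique (h : Set V)) :
    #H ≤ E.ncard + {s : Finset V | #s = r ∧ K.IsClique (s : Set V)}.ncard := by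
  classical
  rw [← card_filter_add_card_filter_not (· ∈ τ '' E)]
  gcongr
  · calc #(H.filter (· ∈ τ '' E)) ≤ (τ '' E).ncard := by
          rw [← Set.ncard_coe_finset]
          exact Set.ncard_le_ncard (fun h hh => (mem_filter.1 hh).2) (hE.image τ)
      _ ≤ E.ncard := Set.ncard_image_le hE
  · rw [← Set.ncard_coe_finset]
    refine Set.ncard_le_ncard (fun h hh => ?_) (Set.toFinite _)
    obtain ⟨hh, hτ⟩ := mem_filter.1 hh
    exact ⟨hH h hh, hK h hh fun e he hτe => hτ ⟨e, he, hτe⟩⟩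

end SimpleGraph

theorem stmt11_general {V W : Type*} [Fintype V] (r : ℕ) (F : SimpleGraph W)
    (H : Finset (Finset V)) (hU : ∀ e ∈ H, e.card = r)
    (hBF : ¬ ∃ (ψ : W → V) (φ : F.edgeSet → Finset V), Function.Injective ψ ∧
        Function.Injective φ ∧ ∀ e : F.edgeSet, φ e ∈ H ∧ ∀ v ∈ (e : Sym2 W), ψ v ∈ φ e) :
    ∃ (G R : SimpleGraph V), R ≤ G ∧
      (¬ ∃ f : W → V, Function.Injective f ∧ ∀ ⦃a b⦄, F.Adj a b → G.Adj (f a) (f b)) ∧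
      ∃ ι : R.edgeSet → Finset V, Function.Injective ι ∧ (∀ e, ι e ∈ H) ∧
        (∀ h ∈ H, (∀ e, ι e ≠ h) → (G \ R).IsClique (↑h : Set V)) ∧
        H.card ≤ R.edgeSet.ncard +
          {s : Finset V | s.card = r ∧ (G \ R).IsClique (↑s : Set V)}.ncard := by
  obtain ⟨R, K, τ, hRK, hτ, hclique⟩ := SimpleGraph.exists_red_blue_decomposition H
  have hK : (R ⊔ K) \ R = K := by rw [sup_sdiff_left_self, hRK.symm.sdiff_eq_left]
  have hR : R.edgeSet ⊆ (R ⊔ K).edgeSet := SimpleGraph.edgeSet_mono le_sup_left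
  refine ⟨R ⊔ K, R, le_sup_left, fun ⟨f, hf, hadj⟩ => hBF (hτ.hasBergeCopy ⟨⟨⟨f, @hadj⟩, hf⟩⟩),
    fun e => τ e, fun e₁ e₂ h => Subtype.ext (hτ.1 (hR e₁.2) (hR e₂.2) h),
    fun e => (hτ.2 _ (hR e.2)).1, ?_, ?_⟩ <;> rw [hK]
  · exact fun h hh hne => hclique h hh fun e he => hne ⟨e, he⟩
  · exact SimpleGraph.card_le_ncard_add_ncard_isClique τ (Set.toFinite _) hU hclique

theorem stmt11 {V W : Type*} [Fintype V] [DecidableEq V] (r : ℕ) (F : SimpleGraph W)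
    (H : Finset (Finset V)) (hU : ∀ e ∈ H, e.card = r)
    (hBF : ¬ ∃ (ψ : W → V) (φ : F.edgeSet → Finset V), Function.Injective ψ ∧
        Function.Injective φ ∧ ∀ e : F.edgeSet, φ e ∈ H ∧ ∀ v ∈ (e : Sym2 W), ψ v ∈ φ e) :
    ∃ (G R : SimpleGraph V), R ≤ G ∧
      (¬ ∃ f : W → V, Function.Injective f ∧ ∀ ⦃a b⦄, F.Adj a b → G.Adj (f a) (f b)) ∧
      ∃ ι : R.edgeSet → Finset V, Function.Injective ι ∧ (∀ e, ι e ∈ H) ∧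
        (∀ h ∈ H, (∀ e, ι e ≠ h) → (G \ R).IsClique (↑h : Set V)) ∧
        H.card ≤ R.edgeSet.ncard +
          {s : Finset V | s.card = r ∧ (G \ R).IsClique (↑s : Set V)}.ncard :=
  stmt11_general r F H hU hBF
end

section
/- Let r ≤ k−1 and n ≥ 2k+2. If H is an r-uniform hypergraph on n vertices containing no Berge-M_{k+1} (Berge matching of size k+1), then |E(H)| ≤ max{h_r(n,k,0), h_r(n,k,k)}, where h_r(n,k,t) = C(2k+1−t, r) + (n−2k−1+t)·C(t, r−1). -/
open Finset

section BergeAux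
variable {V : Type*} [DecidableEq V]



/-- A Berge matching of size `m` in the hypergraph `H`. -/
def IsBM (H : Finset (Finset V)) (m : ℕ) : Prop :=
  ∃ (e : Fin m → Finset V) (x y : Fin m → V), Function.Injective e ∧ (∀ i, e i ∈ H) ∧
    Function.Injective (Sum.elim x y) ∧ ∀ i, x i ∈ e i ∧ y i ∈ e i

/-- The (i,j)-compression of a single edge. -/
def compE (H : Finset (Finset V)) (i j : V) (f : Finset V) : Finset V :=
  if j ∈ f ∧ i ∉ f ∧ insert i (f.erase j) ∉ H then insert i (f.erase j) else f

/-- The (i,j)-compression of a family. -/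
def compF (H : Finset (Finset V)) (i j : V) : Finset (Finset V) := H.image (compE H i j)

lemma compE_card (H : Finset (Finset V)) {i j : V} (hij : i ≠ j) (f : Finset V) :
    (compE H i j f).card = f.card := by
  unfold compE
  split_ifs with h
  · obtain ⟨hj, hi, -⟩ := h
    rw [card_insert_of_notMem (fun hc => hi (mem_of_mem_erase hc)), card_erase_of_mem hj]
    have : 1 ≤ f.card := card_pos.2 ⟨j, hj⟩
    omega
  · rfl

lemma compE_recover {H : Finset (Finset V)} {i j : V} (hij : i ≠ j) {f : Finset V}
    (h : j ∈ f ∧ i ∉ f ∧ insert i (f.erase j) ∉ H) :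
    insert j ((insert i (f.erase j)).erase i) = f := by
  obtain ⟨hj, hi, -⟩ := h
  rw [Finset.erase_insert (fun hc => hi (mem_of_mem_erase hc))]
  exact Finset.insert_erase hj

lemma compE_injOn (H : Finset (Finset V)) {i j : V} (hij : i ≠ j) :
    Set.InjOn (compE H i j) H := by
  intro f1 h1 f2 h2 heq
  unfold compE at heq
  split_ifs at heq with c1 c2 c2
  · -- both moved
    rw [← compE_recover hij c1, ← compE_recover hij c2, heq]
  · -- f1 moved, f2 not
    exfalso
    exact c1.2.2 (heq ▸ h2)
  · exfalso
    exact c2.2.2 (heq ▸ h1)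
  · exact heq

lemma compF_card (H : Finset (Finset V)) {i j : V} (hij : i ≠ j) :
    (compF H i j).card = H.card := card_image_of_injOn (compE_injOn H hij)

lemma compF_uniform (H : Finset (Finset V)) {i j : V} (hij : i ≠ j) {r : ℕ}
    (hU : ∀ f ∈ H, f.card = r) : ∀ g ∈ compF H i j, g.card = r := by
  intro g hg
  obtain ⟨f, hf, rfl⟩ := mem_image.1 hg
  rw [compE_card H hij]
  exact hU f hf

/-- members of the compressed family containing `j` are in `H` and "closed". -/
lemma compF_mem_j {H : Finset (Finset V)} {i j : V} (hij : i ≠ j) {g : Finset V}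
    (hg : g ∈ compF H i j) (hjg : j ∈ g) :
    g ∈ H ∧ (i ∈ g ∨ insert i (g.erase j) ∈ H) := by
  obtain ⟨f, hf, rfl⟩ := mem_image.1 hg
  unfold compE at hjg ⊢
  split_ifs at hjg ⊢ with c
  · exact absurd hjg (fun hc => by
      rcases mem_insert.1 hc with h | h
      · exact hij h.symm
      · exact (notMem_erase j f) h)
  · refine ⟨hf, ?_⟩
    by_contra hcon
    push_neg at hcon
    exact c ⟨hjg, hcon.1, hcon.2⟩

/-- members of the compressed family not in `H`. -/
lemma compF_mem_not_mem {H : Finset (Finset V)} {i j : V} (hij : i ≠ j) {g : Finset V}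
    (hg : g ∈ compF H i j) (hgH : g ∉ H) :
    i ∈ g ∧ j ∉ g ∧ insert j (g.erase i) ∈ H := by
  obtain ⟨f, hf, rfl⟩ := mem_image.1 hg
  unfold compE at hgH ⊢
  split_ifs at hgH ⊢ with c
  · refine ⟨mem_insert_self i _, fun hc => ?_, ?_⟩
    · rcases mem_insert.1 hc with h | h
      · exact hij h.symm
      · exact (notMem_erase j f) h
    · rw [compE_recover hij c]
      exact hf
  · exact absurd hf hgH

/-- the canonical pullback of a compressed edge -/
noncomputable def compP (H : Finset (Finset V)) (i j : V) (g : Finset V) : Finset V :=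
  if g ∈ H then g else insert j (g.erase i)

lemma compP_mem {H : Finset (Finset V)} {i j : V} (hij : i ≠ j) {g : Finset V}
    (hg : g ∈ compF H i j) : compP H i j g ∈ H := by
  unfold compP
  split_ifs with h
  · exact h
  · exact (compF_mem_not_mem hij hg h).2.2

lemma not_mem_recover {i j : V} (hij : i ≠ j) {g : Finset V} (hi : i ∈ g) (hj : j ∉ g) :
    insert i ((insert j (g.erase i)).erase j) = g := by
  rw [Finset.erase_insert (fun hc => hj (mem_of_mem_erase hc))]
  exact Finset.insert_erase hi

lemma compP_injOn {H : Finset (Finset V)} {i j : V} (hij : i ≠ j) {g1 g2 : Finset V}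
    (h1 : g1 ∈ compF H i j) (h2 : g2 ∈ compF H i j)
    (heq : compP H i j g1 = compP H i j g2) : g1 = g2 := by
  unfold compP at heq
  split_ifs at heq with c1 c2 c2
  · exact heq
  · -- g1 ∈ H, g2 ∉ H, g1 = insert j (g2.erase i)
    exfalso
    obtain ⟨hi2, hj2, -⟩ := compF_mem_not_mem hij h2 c2
    have hjg1 : j ∈ g1 := heq ▸ mem_insert_self j _
    have hig1 : i ∉ g1 := by
      rw [heq]
      intro hc
      rcases mem_insert.1 hc with h | h
      · exact hij h
      · exact (notMem_erase i g2) h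
    rcases (compF_mem_j hij h1 hjg1).2 with h | h
    · exact hig1 h
    · -- insert i (g1.erase j) = g2 ∈ H
      apply c2
      have : insert i (g1.erase j) = g2 := by
        rw [heq]
        exact not_mem_recover hij hi2 hj2
      rwa [this] at h
  · exfalso
    obtain ⟨hi1, hj1, -⟩ := compF_mem_not_mem hij h1 c1
    have hjg2 : j ∈ g2 := heq ▸ mem_insert_self j _
    have hig2 : i ∉ g2 := by
      rw [← heq]
      intro hc
      rcases mem_insert.1 hc with h | h
      · exact hij h
      · exact (notMem_erase i g1) h
    rcases (compF_mem_j hij h2 hjg2).2 with h | h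
    · exact hig2 h
    · apply c1
      have : insert i (g2.erase j) = g1 := by
        rw [← heq]
        exact not_mem_recover hij hi1 hj1
      rwa [this] at h
  · -- both ∉ H
    obtain ⟨hi1, hj1, -⟩ := compF_mem_not_mem hij h1 c1
    obtain ⟨hi2, hj2, -⟩ := compF_mem_not_mem hij h2 c2
    rw [← not_mem_recover hij hi1 hj1, ← not_mem_recover hij hi2 hj2, heq]

lemma isBM_compF {H : Finset (Finset V)} {i j : V} (hij : i ≠ j) {m : ℕ}
    (h : IsBM (compF H i j) m) : IsBM H m := by
  classical
  obtain ⟨g, x, y, hginj, hgmem, hxy, hpair⟩ := h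
  set P : Finset V → Finset V := compP H i j with hPdef
  have hPmem : ∀ s, P (g s) ∈ H := fun s => compP_mem hij (hgmem s)
  have hPinj : ∀ s t : Fin m, P (g s) = P (g t) → s = t := fun s t heq =>
    hginj (compP_injOn hij (hgmem s) (hgmem t) heq)
  have hxv : ∀ s, x s ∈ g s := fun s => (hpair s).1
  have hyv : ∀ s, y s ∈ g s := fun s => (hpair s).2
  have hval : ∀ (s : Fin m) (v : V), (x s = v ∨ y s = v) → v ∈ g s := by
    rintro s v (rfl | rfl)
    exacts [hxv s, hyv s]
  have huniq : ∀ (v : V) (s t : Fin m), (x s = v ∨ y s = v) → (x t = v ∨ y t = v) → s = t := by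
    intro v s t hs ht
    rcases hs with hs | hs <;> rcases ht with ht | ht
    · exact Sum.inl_injective (hxy (show Sum.elim x y (.inl s) = Sum.elim x y (.inl t) by
        simp [hs, ht]))
    · exact absurd (hxy (show Sum.elim x y (.inl s) = Sum.elim x y (.inr t) by simp [hs, ht]))
        (by simp)
    · exact absurd (hxy (show Sum.elim x y (.inr s) = Sum.elim x y (.inl t) by simp [hs, ht]))
        (by simp)
    · exact Sum.inr_injective (hxy (show Sum.elim x y (.inr s) = Sum.elim x y (.inr t) by
        simp [hs, ht]))
  have hPval : ∀ (s : Fin m) (v : V), v ∈ g s → v ≠ i → v ∈ P (g s) := by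
    intro s v hv hvi
    by_cases hs : g s ∈ H
    · simpa [hPdef, compP, hs] using hv
    · simp only [hPdef, compP, hs, if_false]
      exact mem_insert_of_mem (mem_erase.2 ⟨hvi, hv⟩)
  by_cases hA : ∃ s0, g s0 ∉ H ∧ (x s0 = i ∨ y s0 = i)
  case neg =>
    push_neg at hA
    refine ⟨P ∘ g, x, y, fun s t h => hPinj s t h, hPmem, hxy, fun s => ⟨?_, ?_⟩⟩
    · by_cases hs : g s ∈ H
      · simpa [hPdef, compP, hs] using hxv s
      · exact hPval s _ (hxv s) (hA s hs).1
    · by_cases hs : g s ∈ H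
      · simpa [hPdef, compP, hs] using hyv s
      · exact hPval s _ (hyv s) (hA s hs).2
  case pos =>
    obtain ⟨s0, hs0H, hs0i⟩ := hA
    obtain ⟨hi0, hj0, hf0⟩ := compF_mem_not_mem hij (hgmem s0) hs0H
    have hPs0 : P (g s0) = insert j ((g s0).erase i) := by simp [hPdef, compP, hs0H]
    set σ := Equiv.swap i j with hσdef
    have hσelim : Sum.elim (fun s => σ (x s)) (fun s => σ (y s)) = σ ∘ Sum.elim x y := by
      funext s; cases s <;> rfl
    have hσinj : Function.Injective (Sum.elim (fun s => σ (x s)) (fun s => σ (y s))) := by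
      rw [hσelim]; exact σ.injective.comp hxy
    have hnoti : ∀ s, s ≠ s0 → ∀ v, (x s = v ∨ y s = v) → v ≠ i := by
      intro s hs v hv hc
      exact hs (huniq i s s0 (hc ▸ hv) hs0i)
    have hs0mem : ∀ v, v ∈ g s0 → σ v ∈ P (g s0) := by
      intro v hv
      have hvj : v ≠ j := fun hc => hj0 (hc ▸ hv)
      by_cases hvi : v = i
      · subst hvi
        rw [hσdef, Equiv.swap_apply_left, hPs0]
        exact mem_insert_self j _
      · rw [hσdef, Equiv.swap_apply_of_ne_of_ne hvi hvj]
        exact hPval s0 v hv hvi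
    by_cases hB : ∃ s1, x s1 = j ∨ y s1 = j
    case neg =>
      push_neg at hB
      have key : ∀ s v, (x s = v ∨ y s = v) → σ v ∈ P (g s) := by
        intro s v hv
        by_cases h0 : s = s0
        · rw [h0] at hv ⊢
          exact hs0mem _ (hval s0 _ hv)
        · have hvj : v ≠ j := by
            rcases hv with rfl | rfl
            exacts [(hB s).1, (hB s).2]
          rw [hσdef, Equiv.swap_apply_of_ne_of_ne (hnoti s h0 v hv) hvj]
          exact hPval s v (hval s v hv) (hnoti s h0 v hv)
      exact ⟨P ∘ g, fun s => σ (x s), fun s => σ (y s), fun s t h => hPinj s t h, hPmem,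
        hσinj, fun s => ⟨key s _ (Or.inl rfl), key s _ (Or.inr rfl)⟩⟩
    case pos =>
      obtain ⟨s1, hs1j⟩ := hB
      have hjs1 : j ∈ g s1 := hval s1 j (by tauto)
      have hs1H : g s1 ∈ H := (compF_mem_j hij (hgmem s1) hjs1).1
      have hs1ne0 : s1 ≠ s0 := fun hc => hj0 (hc ▸ hjs1)
      have hnotj : ∀ s, s ≠ s1 → ∀ v, (x s = v ∨ y s = v) → v ≠ j := by
        intro s hs v hv hc
        exact hs (huniq j s s1 (hc ▸ hv) hs1j)
      have hPs1 : P (g s1) = g s1 := by simp [hPdef, compP, hs1H]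
      -- generic membership for indices other than the special ones
      have hother : ∀ s, s ≠ s0 → s ≠ s1 → ∀ v, (x s = v ∨ y s = v) → σ v ∈ P (g s) := by
        intro s h0 h1 v hv
        rw [hσdef, Equiv.swap_apply_of_ne_of_ne (hnoti s h0 v hv) (hnotj s h1 v hv)]
        exact hPval s v (hval s v hv) (hnoti s h0 v hv)
      by_cases hD : i ∈ g s1
      case pos =>
        refine ⟨P ∘ g, fun s => σ (x s), fun s => σ (y s), fun s t h => hPinj s t h, hPmem,
          hσinj, ?_⟩
        have key : ∀ s v, (x s = v ∨ y s = v) → σ v ∈ P (g s) := by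
          intro s v hv
          by_cases h0 : s = s0
          · rw [h0] at hv ⊢
            exact hs0mem v (hval s0 v hv)
          by_cases h1 : s = s1
          · rw [h1] at hv ⊢
            by_cases hvj : v = j
            · subst hvj
              rw [hσdef, Equiv.swap_apply_right, hPs1]
              exact hD
            · rw [hσdef, Equiv.swap_apply_of_ne_of_ne (hnoti s1 hs1ne0 v hv) hvj]
              exact hPval s1 v (hval s1 v hv) (hnoti s1 hs1ne0 v hv)
          · exact hother s h0 h1 v hv
        exact fun s => ⟨key s _ (Or.inl rfl), key s _ (Or.inr rfl)⟩
      case neg =>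
        have h1mem : insert i ((g s1).erase j) ∈ H := by
          rcases (compF_mem_j hij (hgmem s1) hjs1).2 with h | h
          · exact absurd h hD
          · exact h
        set h1 : Finset V := insert i ((g s1).erase j) with hh1def
        have hjh1 : j ∉ h1 := by
          rw [hh1def]
          intro hc
          rcases mem_insert.1 hc with h | h
          · exact hij h.symm
          · exact (notMem_erase j _) h
        -- membership of the s1-pair in h1
        have hs1mem : ∀ v, (x s1 = v ∨ y s1 = v) → σ v ∈ h1 := by
          intro v hv
          by_cases hvj : v = j
          · subst hvj
            rw [hσdef, Equiv.swap_apply_right]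
            exact mem_insert_self i _
          · rw [hσdef, Equiv.swap_apply_of_ne_of_ne (hnoti s1 hs1ne0 v hv) hvj]
            exact mem_insert_of_mem (mem_erase.2 ⟨hvj, hval s1 v hv⟩)
        by_cases hC : ∃ s', P (g s') = h1
        case neg =>
          push_neg at hC
          refine ⟨Function.update (P ∘ g) s1 h1, fun s => σ (x s), fun s => σ (y s), ?_, ?_,
            hσinj, ?_⟩
          · intro s t heq
            by_cases hs : s = s1 <;> by_cases ht : t = s1
            · rw [hs, ht]
            · subst hs
              rw [Function.update_self, Function.update_of_ne ht] at heq
              exact absurd heq.symm (hC t)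
            · subst ht
              rw [Function.update_self, Function.update_of_ne hs] at heq
              exact absurd heq (hC s)
            · rw [Function.update_of_ne hs, Function.update_of_ne ht] at heq
              exact hPinj s t heq
          · intro s
            by_cases hs : s = s1
            · subst hs; rw [Function.update_self]; exact h1mem
            · rw [Function.update_of_ne hs]; exact hPmem s
          · have key : ∀ s v, (x s = v ∨ y s = v) → σ v ∈ Function.update (P ∘ g) s1 h1 s := by
              intro s v hv
              by_cases h1' : s = s1
              · rw [h1'] at hv ⊢
                rw [Function.update_self]
                exact hs1mem v hv
              rw [Function.update_of_ne h1']
              by_cases h0 : s = s0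
              · rw [h0] at hv ⊢
                exact hs0mem v (hval s0 v hv)
              · exact hother s h0 h1' v hv
            exact fun s => ⟨key s _ (Or.inl rfl), key s _ (Or.inr rfl)⟩
        case pos =>
          obtain ⟨s', hs'⟩ := hC
          have hs'1 : s' ≠ s1 := by
            intro hc
            subst hc
            rw [hPs1] at hs'
            exact hD (hs' ▸ mem_insert_self i _)
          have hs'0 : s' ≠ s0 := by
            intro hc
            subst hc
            rw [hPs0] at hs'
            exact hjh1 (hs' ▸ mem_insert_self j _)
          have hs'H : g s' ∈ H := by
            by_contra hc
            have h3 := compF_mem_not_mem hij (hgmem s') hc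
            have : P (g s') = insert j ((g s').erase i) := by simp [hPdef, compP, hc]
            rw [this] at hs'
            exact hjh1 (hs' ▸ mem_insert_self j _)
          have hPs' : P (g s') = g s' := by simp [hPdef, compP, hs'H]
          have hgs' : g s' = h1 := by rw [← hPs', hs']
          refine ⟨fun s => P (g (Equiv.swap s1 s' s)), fun s => σ (x s), fun s => σ (y s),
            fun s t heq => (Equiv.swap s1 s').injective (hPinj _ _ heq), fun s => hPmem _,
            hσinj, ?_⟩
          have key : ∀ s v, (x s = v ∨ y s = v) → σ v ∈ P (g (Equiv.swap s1 s' s)) := by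
            intro s v hv
            by_cases h1' : s = s1
            · rw [h1'] at hv ⊢
              rw [Equiv.swap_apply_left, hPs', hgs']
              exact hs1mem v hv
            by_cases h2' : s = s'
            · rw [h2'] at hv ⊢
              rw [Equiv.swap_apply_right, hPs1]
              have hvi : v ≠ i := hnoti s' hs'0 v hv
              have hvj : v ≠ j := hnotj s' hs'1 v hv
              rw [hσdef, Equiv.swap_apply_of_ne_of_ne hvi hvj]
              have : v ∈ h1 := hgs' ▸ hval s' v hv
              rw [hh1def] at this
              rcases mem_insert.1 this with h | h
              · exact absurd h hvi
              · exact mem_of_mem_erase h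
            · rw [Equiv.swap_apply_of_ne_of_ne h1' h2']
              by_cases h0 : s = s0
              · subst h0; exact hs0mem v (hval s v hv)
              · exact hother s h0 h1' v hv
          exact fun s => ⟨key s _ (Or.inl rfl), key s _ (Or.inr rfl)⟩

end BergeAux

def Shifted {n : ℕ} (H : Finset (Finset (Fin n))) : Prop :=
  ∀ i j : Fin n, i < j → ∀ f ∈ H, j ∈ f → i ∉ f → insert i (f.erase j) ∈ H

def wt {n : ℕ} (f : Finset (Fin n)) : ℕ := ∑ v ∈ f, v.val

def wtF {n : ℕ} (H : Finset (Finset (Fin n))) : ℕ := ∑ f ∈ H, wt f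

lemma wt_move {n : ℕ} {i j : Fin n} (hij : i < j) {f : Finset (Fin n)}
    (hj : j ∈ f) (hi : i ∉ f) : wt (insert i (f.erase j)) < wt f := by
  unfold wt
  rw [Finset.sum_insert (fun hc => hi (Finset.mem_of_mem_erase hc))]
  have h1 : ∑ v ∈ f.erase j, v.val + j.val = ∑ v ∈ f, v.val := Finset.sum_erase_add f _ hj
  have : (i : ℕ) < j := hij
  omega

lemma wt_compE_le {n : ℕ} (H : Finset (Finset (Fin n))) {i j : Fin n} (hij : i < j)
    (f : Finset (Fin n)) : wt (compE H i j f) ≤ wt f := by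
  unfold compE
  split_ifs with c
  · exact le_of_lt (wt_move hij c.1 c.2.1)
  · exact le_rfl

lemma wtF_compF_lt {n : ℕ} (H : Finset (Finset (Fin n))) {i j : Fin n} (hij : i < j)
    {f₀ : Finset (Fin n)} (hf₀ : f₀ ∈ H) (hj : j ∈ f₀) (hi : i ∉ f₀)
    (hins : insert i (f₀.erase j) ∉ H) : wtF (compF H i j) < wtF H := by
  have hne : i ≠ j := ne_of_lt hij
  have h1 : wtF (compF H i j) = ∑ f ∈ H, wt (compE H i j f) :=
    Finset.sum_image (fun x hx y hy h => compE_injOn H hne hx hy h)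
  rw [h1]
  apply Finset.sum_lt_sum (fun f hf => wt_compE_le H hij f)
  refine ⟨f₀, hf₀, ?_⟩
  have : compE H i j f₀ = insert i (f₀.erase j) := if_pos ⟨hj, hi, hins⟩
  rw [this]
  exact wt_move hij hj hi

lemma exists_shifted {n r : ℕ} :
    ∀ (N : ℕ) (H : Finset (Finset (Fin n))), wtF H ≤ N → (∀ f ∈ H, f.card = r) →
    ∃ H' : Finset (Finset (Fin n)), Shifted H' ∧ H'.card = H.card ∧ (∀ f ∈ H', f.card = r) ∧
      ∀ m, IsBM H' m → IsBM H m := by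
  intro N
  induction N using Nat.strong_induction_on with
  | _ N IH =>
    intro H hw hU
    by_cases hS : Shifted H
    · exact ⟨H, hS, rfl, hU, fun m h => h⟩
    · unfold Shifted at hS
      push_neg at hS
      obtain ⟨i, j, hij, f₀, hf₀, hjf, hif, hins⟩ := hS
      have hne : i ≠ j := ne_of_lt hij
      have hlt : wtF (compF H i j) < wtF H := wtF_compF_lt H hij hf₀ hjf hif hins
      have hwlt : wtF (compF H i j) < N := lt_of_lt_of_le hlt hw
      obtain ⟨H', hS', hc', hU', hBM'⟩ :=
        IH (wtF (compF H i j)) hwlt (compF H i j) le_rfl (compF_uniform H hne hU)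
      exact ⟨H', hS', by rw [hc', compF_card H hne], hU',
        fun m h => isBM_compF hne (hBM' m h)⟩


def domCount {n : ℕ} (f : Finset (Fin n)) (s : ℕ) : ℕ :=
  (f.filter (fun v => s ≤ v.val)).card

lemma shifted_mem_of_dom {n : ℕ} {H : Finset (Finset (Fin n))} (hS : Shifted H) :
    ∀ (N : ℕ) (f : Finset (Fin n)), wt f ≤ N → f ∈ H →
    ∀ g : Finset (Fin n), g.card = f.card →
    (∀ s : ℕ, domCount g s ≤ domCount f s) → g ∈ H := by
  intro N
  induction N using Nat.strong_induction_on with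
  | _ N IH =>
    intro f hw hf g hcard hdom
    by_cases hfg : g = f
    · rwa [hfg]
    have hfg1 : (f \ g).Nonempty := by
      rw [Finset.sdiff_nonempty]
      intro hsub
      exact hfg (Finset.eq_of_subset_of_card_le hsub hcard.le).symm
    have hgf1 : (g \ f).Nonempty := by
      rw [Finset.sdiff_nonempty]
      intro hsub
      exact hfg (Finset.eq_of_subset_of_card_le hsub hcard.ge)
    set b := (f \ g).max' hfg1 with hbdef
    set a := (g \ f).max' hgf1 with hadef
    have hbf : b ∈ f := (mem_sdiff.1 ((f \ g).max'_mem hfg1)).1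
    have hbg : b ∉ g := (mem_sdiff.1 ((f \ g).max'_mem hfg1)).2
    have hag : a ∈ g := (mem_sdiff.1 ((g \ f).max'_mem hgf1)).1
    have haf : a ∉ f := (mem_sdiff.1 ((g \ f).max'_mem hgf1)).2
    have hab : a < b := by
      by_contra hba
      push_neg at hba  -- b ≤ a
      have hsub : f.filter (fun v => a.val ≤ v.val) ⊆
          (g.filter (fun v => a.val ≤ v.val)).erase a := by
        intro v hv
        rw [mem_filter] at hv
        obtain ⟨hvf, hva⟩ := hv
        have hvne : v ≠ a := fun hc => haf (hc ▸ hvf)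
        have hvg : v ∈ g := by
          by_contra hvg
          have hvfg : v ∈ f \ g := mem_sdiff.2 ⟨hvf, hvg⟩
          have hvb : v ≤ b := Finset.le_max' _ v hvfg
          have : v = a := Fin.ext (le_antisymm (le_trans hvb hba) hva)
          exact hvne this
        exact mem_erase.2 ⟨hvne, mem_filter.2 ⟨hvg, hva⟩⟩
      have h1 : domCount f a.val ≤ ((g.filter (fun v => a.val ≤ v.val)).erase a).card :=
        card_le_card hsub
      have h1' : ((g.filter (fun v => a.val ≤ v.val)).erase a).card =
          (g.filter (fun v => a.val ≤ v.val)).card - 1 :=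
        card_erase_of_mem (mem_filter.2 ⟨hag, le_refl _⟩)
      have h2 : 1 ≤ (g.filter (fun v => a.val ≤ v.val)).card :=
        card_pos.2 ⟨a, mem_filter.2 ⟨hag, le_refl _⟩⟩
      have h3 := hdom a.val
      unfold domCount at h1 h3
      omega
    have habn : (a : ℕ) < (b : ℕ) := hab
    have hf' : insert a (f.erase b) ∈ H := hS a b hab f hf hbf haf
    set f' := insert a (f.erase b) with hf'def
    have hwt' : wt f' < wt f := wt_move hab hbf haf
    have hcard' : f'.card = f.card := by
      rw [hf'def, card_insert_of_notMem (fun hc => haf (mem_of_mem_erase hc)),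
        card_erase_of_mem hbf]
      have : 1 ≤ f.card := card_pos.2 ⟨b, hbf⟩
      omega
    have hdom' : ∀ s : ℕ, domCount g s ≤ domCount f' s := by
      intro s
      have hfe : (f.erase b).filter (fun v => s ≤ v.val) =
          (f.filter (fun v => s ≤ v.val)).erase b := Finset.filter_erase _ b f
      by_cases hpa : s ≤ a.val
      · have hbmem : b ∈ f.filter (fun v => s ≤ v.val) := mem_filter.2 ⟨hbf, by omega⟩
        have hanotmem : a ∉ (f.filter (fun v => s ≤ v.val)).erase b :=
          fun hc => haf (mem_filter.1 (mem_of_mem_erase hc)).1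
        have hkey : domCount f' s = ((f.filter (fun v => s ≤ v.val)).erase b).card + 1 := by
          unfold domCount
          rw [hf'def, filter_insert, if_pos hpa, hfe]
          exact card_insert_of_notMem hanotmem
        rw [hkey, card_erase_of_mem hbmem]
        have h1 := hdom s
        have h2 : 1 ≤ (f.filter (fun v => s ≤ v.val)).card := card_pos.2 ⟨b, hbmem⟩
        unfold domCount at h1 ⊢
        omega
      · have hcount : domCount f' s = ((f.filter (fun v => s ≤ v.val)).erase b).card := by
          unfold domCount
          rw [hf'def, filter_insert, if_neg hpa, hfe]
        by_cases hpb : s ≤ b.val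
        · have hsub : g.filter (fun v => s ≤ v.val) ⊆
              (f.filter (fun v => s ≤ v.val)).erase b := by
            intro v hv
            rw [mem_filter] at hv
            obtain ⟨hvg, hvs⟩ := hv
            have hvne : v ≠ b := fun hc => hbg (hc ▸ hvg)
            have hvf : v ∈ f := by
              by_contra hvf
              have hva : v ≤ a := Finset.le_max' _ v (mem_sdiff.2 ⟨hvg, hvf⟩)
              have : (v : ℕ) ≤ a.val := hva
              omega
            exact mem_erase.2 ⟨hvne, mem_filter.2 ⟨hvf, hvs⟩⟩
          rw [hcount]
          exact card_le_card hsub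
        · have hbnot : b ∉ f.filter (fun v => s ≤ v.val) :=
            fun hc => hpb (mem_filter.1 hc).2
          rw [hcount, Finset.erase_eq_of_notMem hbnot]
          exact hdom s
    exact IH (wt f') (lt_of_lt_of_le hwt' hw) f' le_rfl hf' g (hcard.trans hcard'.symm) hdom'


def iseg (n c : ℕ) : Finset (Fin n) := univ.filter (fun v => v.val < c)

lemma mem_iseg {n c : ℕ} {v : Fin n} : v ∈ iseg n c ↔ v.val < c := by simp [iseg]

lemma filter_lt_card_add_domCount {n : ℕ} (f : Finset (Fin n)) (s : ℕ) :
    (f.filter (fun v => v.val < s)).card + domCount f s = f.card := by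
  unfold domCount
  have he : f.filter (fun v => ¬ v.val < s) = f.filter (fun v => s ≤ v.val) :=
    filter_congr (fun v _ => by simp [not_lt])
  have h0 := Finset.card_filter_add_card_filter_not (s := f)
    (p := fun v : Fin n => v.val < s)
  rw [he] at h0
  exact h0

lemma card_filter_lt_le {n : ℕ} (f : Finset (Fin n)) (s : ℕ) :
    (f.filter (fun v => v.val < s)).card ≤ s := by
  have h : (f.filter (fun v => v.val < s)).card ≤ (Finset.range s).card := by
    apply Finset.card_le_card_of_injOn (fun v => v.val)
    · intro v hv
      exact mem_range.2 (mem_filter.1 hv).2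
    · intro v _ w _ h
      exact Fin.ext h
  simpa using h

lemma domCount_ge {n : ℕ} {f : Finset (Fin n)} {r : ℕ} (hcard : f.card = r) (s : ℕ) :
    r - s ≤ domCount f s := by
  have h1 := filter_lt_card_add_domCount f s
  have h2 := card_filter_lt_le f s
  omega

lemma domCount_anti {n : ℕ} (f : Finset (Fin n)) {s s' : ℕ} (h : s ≤ s') :
    domCount f s' ≤ domCount f s := by
  apply card_le_card
  intro v hv
  rw [mem_filter] at hv ⊢
  exact ⟨hv.1, le_trans h hv.2⟩

lemma domCount_insert_le {n : ℕ} (a : Fin n) (u : Finset (Fin n)) (s : ℕ) :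
    domCount (insert a u) s ≤ domCount u s + 1 := by
  unfold domCount
  rw [filter_insert]
  split_ifs
  · exact card_insert_le _ _
  · exact Nat.le_succ _

lemma domCount_iseg_le (n c s : ℕ) : domCount (iseg n c) s ≤ c - s := by
  have h : ((iseg n c).filter (fun v => s ≤ v.val)).card ≤ (Finset.Ico s c).card := by
    apply Finset.card_le_card_of_injOn (fun v => v.val)
    · intro v hv
      rw [mem_coe, mem_filter] at hv
      exact mem_Ico.2 ⟨hv.2, mem_iseg.1 hv.1⟩
    · intro v _ w _ h
      exact Fin.ext h
  simpa [domCount, Nat.card_Ico] using h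

lemma domCount_eq_zero {n : ℕ} {f : Finset (Fin n)} {s : ℕ} (h : ∀ v ∈ f, v.val < s) :
    domCount f s = 0 := by
  unfold domCount
  rw [card_eq_zero, filter_eq_empty_iff]
  intro v hv
  exact not_le.2 (h v hv)

lemma card_iseg {n c : ℕ} (h : c ≤ n) : (iseg n c).card = c := by
  rw [show iseg n c = (Finset.range c).attachFin
      (fun m hm => lt_of_lt_of_le (Finset.mem_range.1 hm) h) from ?_,
    Finset.card_attachFin, Finset.card_range]
  ext v
  simp [iseg, Finset.mem_attachFin]

lemma structure_lemma {n k r : ℕ} (hr2 : 2 ≤ r) (hrk : r + 1 ≤ k) (hn : 2*k+2 ≤ n)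
    {H : Finset (Finset (Fin n))} (hS : Shifted H) (hU : ∀ f ∈ H, f.card = r)
    (hB : ¬ IsBM H (k+1)) :
    ∃ t ≤ k, ∀ f ∈ H,
      (∀ v ∈ f, v.val < 2*k+1-t) ∨ r - 1 ≤ (f.filter (fun v => v.val < t)).card := by
  by_contra hcon
  push_neg at hcon
  have hch : ∀ t : Fin (k+1), ∃ f, f ∈ H ∧ (∃ v ∈ f, 2*k+1-t.val ≤ v.val) ∧
      (f.filter (fun v => v.val < t.val)).card + 2 ≤ r := by
    intro t
    obtain ⟨f, hf, ⟨v, hv, hv2⟩, h3⟩ := hcon t.val (by omega)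
    exact ⟨f, hf, ⟨v, hv, by omega⟩, by omega⟩
  choose F hFmem hFbig hFsmall using hch
  have hyb : ∀ t : Fin (k+1), 2*k+1-t.val < n := fun t => by omega
  have hxb : ∀ t : Fin (k+1), t.val < n := fun t => by have := t.isLt; omega
  set X : Fin (k+1) → Fin n := fun t => ⟨t.val, hxb t⟩ with hXdef
  set Y : Fin (k+1) → Fin n := fun t => ⟨2*k+1-t.val, hyb t⟩ with hYdef
  set G : Fin (k+1) → Finset (Fin n) := fun t =>
    if t.val + 3 ≤ r then insert (Y t) (iseg n (r-1))
    else insert (X t) (insert (Y t) (iseg n (r-2))) with hGdef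
  have htk : ∀ t : Fin (k+1), t.val ≤ k := fun t => by have := t.isLt; omega
  have hYge : ∀ t : Fin (k+1), k+1 ≤ (Y t).val := fun t => by
    have := htk t; simp only [hYdef]; omega
  have hYnotseg : ∀ (t : Fin (k+1)) (c : ℕ), c ≤ k → Y t ∉ iseg n c := by
    intro t c hc hmem
    have h1 := mem_iseg.1 hmem
    have := hYge t
    omega
  have hXYne : ∀ t t' : Fin (k+1), X t ≠ Y t' := by
    intro t t' hc
    have h1 : t.val = 2*k+1-t'.val := congrArg Fin.val hc
    have := htk t; have := htk t'
    omega
  -- membership of X t and Y t in G t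
  have hXmem : ∀ t, X t ∈ G t := by
    intro t
    simp only [hGdef]
    split_ifs with hc
    · refine mem_insert_of_mem (mem_iseg.2 ?_)
      simp only [hXdef]
      omega
    · exact mem_insert_self _ _
  have hYmem : ∀ t, Y t ∈ G t := by
    intro t
    simp only [hGdef]
    split_ifs with hc
    · exact mem_insert_self _ _
    · exact mem_insert_of_mem (mem_insert_self _ _)
  have hXval : ∀ t : Fin (k+1), (X t).val = t.val := fun t => rfl
  have hYval : ∀ t : Fin (k+1), (Y t).val = 2*k+1-t.val := fun t => rfl
  -- all elements of G t are ≤ 2k+1−t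
  have hGbound : ∀ t, ∀ v ∈ G t, v.val ≤ 2*k+1-t.val := by
    intro t v hv
    have htk' := htk t
    simp only [hGdef] at hv
    split_ifs at hv with hc
    · rcases mem_insert.1 hv with rfl | hv
      · rw [hYval]
      · have := mem_iseg.1 hv; omega
    · rcases mem_insert.1 hv with rfl | hv
      · rw [hXval]; omega
      · rcases mem_insert.1 hv with rfl | hv
        · rw [hYval]
        · have := mem_iseg.1 hv; omega
  -- cardinality of G t
  have hGcard : ∀ t, (G t).card = r := by
    intro t
    have htk' := htk t
    simp only [hGdef]
    split_ifs with hc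
    · rw [card_insert_of_notMem (hYnotseg t (r-1) (by omega)), card_iseg (by omega)]
      omega
    · rw [card_insert_of_notMem, card_insert_of_notMem (hYnotseg t (r-2) (by omega)),
        card_iseg (by omega)]
      · omega
      · intro hmem
        rcases mem_insert.1 hmem with h | h
        · exact hXYne t t h
        · have := mem_iseg.1 h
          have := hXval t
          omega
  -- G t belongs to H by domination
  have hGmem : ∀ t, G t ∈ H := by
    intro t
    have htk' := htk t
    apply shifted_mem_of_dom hS (wt (F t)) (F t) le_rfl (hFmem t) (G t)
      (by rw [hGcard t, hU (F t) (hFmem t)])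
    intro s
    -- lower bounds on domCount (F t) s
    have hFcard : (F t).card = r := hU (F t) (hFmem t)
    have LB1 : r - s ≤ domCount (F t) s := domCount_ge hFcard s
    have LB2 : s ≤ t.val → 2 ≤ domCount (F t) s := by
      intro hs
      have h1 := filter_lt_card_add_domCount (F t) t.val
      have h2 := hFsmall t
      have h3 := domCount_anti (F t) hs
      omega
    have LB3 : s ≤ 2*k+1-t.val → 1 ≤ domCount (F t) s := by
      intro hs
      obtain ⟨v, hv, hv2⟩ := hFbig t
      have : v ∈ (F t).filter (fun v => s ≤ v.val) := mem_filter.2 ⟨hv, by omega⟩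
      have := card_pos.2 ⟨v, this⟩
      unfold domCount
      omega
    -- upper bounds on domCount (G t) s
    simp only [hGdef]
    split_ifs with hc
    · by_cases hs1 : s ≤ r-1
      · have h1 := domCount_insert_le (Y t) (iseg n (r-1)) s
        have h2 := domCount_iseg_le n (r-1) s
        omega
      · by_cases hs2 : s ≤ 2*k+1-t.val
        · -- filter ⊆ {Y t}
          have hsub : (insert (Y t) (iseg n (r-1))).filter (fun v => s ≤ v.val) ⊆ {Y t} := by
            intro v hv
            rw [mem_filter] at hv
            rcases mem_insert.1 hv.1 with h | h
            · exact mem_singleton.2 h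
            · have := mem_iseg.1 h
              have := hv.2
              omega
          have h1 : domCount (insert (Y t) (iseg n (r-1))) s ≤ 1 := by
            unfold domCount
            simpa using card_le_card hsub
          have h3 := LB3 hs2
          omega
        · have hz : domCount (insert (Y t) (iseg n (r-1))) s = 0 := by
            apply domCount_eq_zero
            intro v hv
            rcases mem_insert.1 hv with rfl | hv
            · rw [hYval]; omega
            · have := mem_iseg.1 hv; omega
          omega
    · -- t.val ≥ r−2 case
      by_cases hs1 : s ≤ r-2
      · have h1 := domCount_insert_le (X t) (insert (Y t) (iseg n (r-2))) s
        have h2 := domCount_insert_le (Y t) (iseg n (r-2)) s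
        have h3 := domCount_iseg_le n (r-2) s
        omega
      · by_cases hs2 : s ≤ t.val
        · have hsub : (insert (X t) (insert (Y t) (iseg n (r-2)))).filter
              (fun v => s ≤ v.val) ⊆ {X t, Y t} := by
            intro v hv
            rw [mem_filter] at hv
            rcases mem_insert.1 hv.1 with h | h
            · exact mem_insert.2 (Or.inl h)
            · rcases mem_insert.1 h with h | h
              · exact mem_insert.2 (Or.inr (mem_singleton.2 h))
              · have := mem_iseg.1 h
                have := hv.2
                omega
          have h1 : domCount (insert (X t) (insert (Y t) (iseg n (r-2)))) s ≤ 2 := by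
            unfold domCount
            refine le_trans (card_le_card hsub) ?_
            exact (card_insert_le _ _).trans (by simp)
          have h2 := LB2 hs2
          omega
        · by_cases hs3 : s ≤ 2*k+1-t.val
          · have hsub : (insert (X t) (insert (Y t) (iseg n (r-2)))).filter
                (fun v => s ≤ v.val) ⊆ {Y t} := by
              intro v hv
              rw [mem_filter] at hv
              rcases mem_insert.1 hv.1 with h | h
              · exfalso
                have := hv.2
                rw [h, hXval] at this
                omega
              · rcases mem_insert.1 h with h | h
                · exact mem_singleton.2 h
                · have := mem_iseg.1 h
                  have := hv.2
                  omega
            have h1 : domCount (insert (X t) (insert (Y t) (iseg n (r-2)))) s ≤ 1 := by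
              unfold domCount
              simpa using card_le_card hsub
            have h3 := LB3 hs3
            omega
          · have hz : domCount (insert (X t) (insert (Y t) (iseg n (r-2)))) s = 0 := by
              apply domCount_eq_zero
              intro v hv
              rcases mem_insert.1 hv with rfl | hv
              · rw [hXval]; omega
              · rcases mem_insert.1 hv with rfl | hv
                · rw [hYval]; omega
                · have := mem_iseg.1 hv; omega
            omega
  -- injectivity of G
  have hGinj : Function.Injective G := by
    intro t t' heq
    have h1 : Y t ∈ G t' := heq ▸ hYmem t
    have h2 : Y t = Y t' := by
      have hYgeT := hYge t
      have htk' := htk t'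
      simp only [hGdef] at h1
      split_ifs at h1 with hc
      · rcases mem_insert.1 h1 with h | h
        · exact h
        · exfalso
          have := mem_iseg.1 h
          omega
      · rcases mem_insert.1 h1 with h | h
        · exact absurd h.symm (hXYne t' t)
        · rcases mem_insert.1 h with h | h
          · exact h
          · exfalso
            have := mem_iseg.1 h
            omega
    have h4 : (Y t).val = (Y t').val := congrArg Fin.val h2
    rw [hYval, hYval] at h4
    have := htk t; have := htk t'
    exact Fin.ext (by omega)
  -- injectivity of the pair system
  have hXYinj : Function.Injective (Sum.elim X Y) := by
    intro a b heq
    match a, b with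
    | Sum.inl a, Sum.inl b =>
      simp only [Sum.elim_inl] at heq
      have h := congrArg Fin.val heq
      rw [hXval a, hXval b] at h
      exact congrArg Sum.inl (Fin.ext h)
    | Sum.inl a, Sum.inr b =>
      exact absurd heq (hXYne a b)
    | Sum.inr a, Sum.inl b =>
      exact absurd heq.symm (hXYne b a)
    | Sum.inr a, Sum.inr b =>
      simp only [Sum.elim_inr] at heq
      have h4 : (Y a).val = (Y b).val := congrArg Fin.val heq
      rw [hYval, hYval] at h4
      have := htk a; have := htk b
      exact congrArg Sum.inr (Fin.ext (by omega))
  exact hB ⟨G, X, Y, hGinj, hGmem, hXYinj, fun t => ⟨hXmem t, hYmem t⟩⟩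


lemma filter_union_self {n : ℕ} (f : Finset (Fin n)) (t : ℕ) :
    f = (f.filter (fun v => v.val < t)) ∪ (f.filter (fun v => t ≤ v.val)) := by
  ext v
  simp only [mem_union, mem_filter]
  constructor
  · intro hv
    rcases lt_or_ge (v.val) t with h | h
    · exact Or.inl ⟨hv, h⟩
    · exact Or.inr ⟨hv, h⟩
  · rintro (⟨hv, -⟩ | ⟨hv, -⟩) <;> exact hv

lemma count_lemma {n k r t : ℕ} (ht : t ≤ k) (hn : 2*k+2 ≤ n) (hr2 : 2 ≤ r)
    {H : Finset (Finset (Fin n))} (hU : ∀ f ∈ H, f.card = r)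
    (hstruct : ∀ f ∈ H, (∀ v ∈ f, v.val < 2*k+1-t) ∨
      r - 1 ≤ (f.filter (fun v => v.val < t)).card) :
    H.card ≤ (2*k+1-t).choose r + (n-(2*k+1-t)) * t.choose (r-1) := by
  classical
  have hBn : 2*k+1-t ≤ n := by omega
  have htB : t ≤ 2*k+1-t := by omega
  have hsplit := Finset.card_filter_add_card_filter_not (s := H)
    (p := fun f => ∀ v ∈ f, v.val < 2*k+1-t)
  have hH1 : (H.filter (fun f => ∀ v ∈ f, v.val < 2*k+1-t)).card ≤ (2*k+1-t).choose r := by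
    have hsub : H.filter (fun f => ∀ v ∈ f, v.val < 2*k+1-t) ⊆
        Finset.powersetCard r (iseg n (2*k+1-t)) := by
      intro f hf
      rw [mem_filter] at hf
      exact mem_powersetCard.2 ⟨fun v hv => mem_iseg.2 (hf.2 v hv), hU f hf.1⟩
    calc (H.filter (fun f => ∀ v ∈ f, v.val < 2*k+1-t)).card
        ≤ (Finset.powersetCard r (iseg n (2*k+1-t))).card := card_le_card hsub
      _ = (2*k+1-t).choose r := by rw [Finset.card_powersetCard, card_iseg hBn]
  have hH2 : (H.filter (fun f => ¬ ∀ v ∈ f, v.val < 2*k+1-t)).card ≤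
      (n-(2*k+1-t)) * t.choose (r-1) := by
    set S1 := (univ : Finset (Fin n)).filter (fun v => 2*k+1-t ≤ v.val) with hS1
    have hcS1 : S1.card = n - (2*k+1-t) := by
      have h1 := filter_lt_card_add_domCount (univ : Finset (Fin n)) (2*k+1-t)
      have h2 : ((univ : Finset (Fin n)).filter (fun v => v.val < 2*k+1-t)).card = 2*k+1-t :=
        card_iseg hBn
      have h3 : (univ : Finset (Fin n)).card = n := by simp
      unfold domCount at h1
      rw [hS1]
      omega
    have hcard2 : ((S1.image (fun v => ({v} : Finset (Fin n)))) ×ˢ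
        Finset.powersetCard (r-1) (iseg n t)).card = (n-(2*k+1-t)) * t.choose (r-1) := by
      rw [card_product, Finset.card_image_of_injective _ (fun a b h => by
          simpa using h), Finset.card_powersetCard, card_iseg (by omega), hcS1]
    rw [← hcard2]
    apply card_le_card_of_injOn
      (fun f => (f.filter (fun v => t ≤ v.val), f.filter (fun v => v.val < t)))
    · intro f hf
      rw [mem_coe, mem_filter] at hf
      obtain ⟨hfH, hfbig⟩ := hf
      push_neg at hfbig
      obtain ⟨v, hv, hv2⟩ := hfbig
      first
      | rw [not_lt] at hv2
      | skip
      have hfr := hU f hfH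
      have hsmall : r - 1 ≤ (f.filter (fun v => v.val < t)).card := by
        rcases hstruct f hfH with h | h
        · exact absurd (h v hv) (by omega)
        · exact h
      have hsum := filter_lt_card_add_domCount f t
      have hvmem : v ∈ f.filter (fun v => t ≤ v.val) := mem_filter.2 ⟨hv, by omega⟩
      have hdpos : 1 ≤ domCount f t := card_pos.2 ⟨v, hvmem⟩
      have hd1 : domCount f t = 1 := by
        unfold domCount at hdpos hsum ⊢
        omega
      have hsing : f.filter (fun v => t ≤ v.val) = {v} := by
        unfold domCount at hd1
        obtain ⟨w, hw⟩ := card_eq_one.1 hd1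
        rw [hw]
        congr
        have : v ∈ ({w} : Finset (Fin n)) := hw ▸ hvmem
        exact (mem_singleton.1 this).symm
      rw [mem_coe, mem_product]
      dsimp only
      constructor
      · rw [hsing]
        exact mem_image.2 ⟨v, mem_filter.2 ⟨mem_univ v, hv2⟩, rfl⟩
      · refine mem_powersetCard.2 ⟨fun w hw => mem_iseg.2 (mem_filter.1 hw).2, ?_⟩
        unfold domCount at hd1 hsum
        omega
    · intro f1 h1 f2 h2 heq
      rw [Prod.mk.injEq] at heq
      rw [filter_union_self f1 t, filter_union_self f2 t, heq.1, heq.2]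
  omega


lemma convex_endpoint {g : ℕ → ℤ} {k : ℕ}
    (hmono : ∀ a b : ℕ, a ≤ b → b + 1 ≤ k → g (a+1) - g a ≤ g (b+1) - g b) :
    ∀ t, t ≤ k → g t ≤ max (g 0) (g k) := by
  intro t ht
  by_cases hdec : ∀ s, s < t → g (s+1) ≤ g s
  · have hchain : ∀ u, u ≤ t → g u ≤ g 0 := by
      intro u hu
      induction u with
      | zero => exact le_refl _
      | succ v ih => exact le_trans (hdec v (by omega)) (ih (by omega))
    exact le_trans (hchain t le_rfl) (le_max_left _ _)
  · push_neg at hdec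
    obtain ⟨s0, hs0t, hs0⟩ := hdec
    have hinc : ∀ u, s0 ≤ u → u < k → g u ≤ g (u+1) := by
      intro u hu huk
      have := hmono s0 u hu (by omega)
      omega
    have hchain : ∀ u, t ≤ u → u ≤ k → g t ≤ g u := by
      intro u hu huk
      induction u with
      | zero =>
        have h0 : t = 0 := by omega
        rw [h0]
      | succ v ih =>
        by_cases hv : t = v + 1
        · rw [← hv]
        · have h1 : g t ≤ g v := ih (by omega) (by omega)
          have h2 : g v ≤ g (v+1) := hinc v (by omega) (by omega)
          exact le_trans h1 h2
    exact le_trans (hchain k ht le_rfl) (le_max_right _ _)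

lemma h_max {n k r : ℕ} (hr2 : 2 ≤ r) (hrk : r + 1 ≤ k) (hn : 2*k+2 ≤ n) {t : ℕ} (ht : t ≤ k) :
    (2*k+1-t).choose r + (n-(2*k+1-t)) * t.choose (r-1) ≤
      max ((2*k+1).choose r) ((k+1).choose r + (n-k-1) * k.choose (r-1)) := by
  obtain ⟨r', rfl⟩ : ∃ r', r = r' + 2 := ⟨r - 2, by omega⟩
  have er1 : r' + 2 - 1 = r' + 1 := by omega
  rw [er1]
  set gZ : ℕ → ℤ := fun u =>
    ((2*k+1-u).choose (r'+2) : ℤ) + ((n:ℤ) - 2*k - 1 + u) * (u.choose (r'+1) : ℤ) with hgZ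
  have hdiff : ∀ a : ℕ, a + 1 ≤ k → gZ (a+1) - gZ a =
      ((a+1).choose (r'+1) : ℤ) + ((n:ℤ) - 2*k - 1 + a) * (a.choose r' : ℤ)
        - ((2*k-a).choose (r'+1) : ℤ) := by
    intro a ha
    have h2 : 2*k+1-(a+1) = 2*k-a := by omega
    have h3 : (2*k+1-a).choose (r'+2) = (2*k-a).choose (r'+1) + (2*k-a).choose (r'+2) := by
      have he : 2*k+1-a = (2*k-a)+1 := by omega
      rw [he, Nat.choose_succ_succ]
    have h4 : (a+1).choose (r'+1) = a.choose r' + a.choose (r'+1) := Nat.choose_succ_succ _ _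
    simp only [hgZ, h2, h3, h4]
    push_cast
    ring
  have hmono : ∀ a b : ℕ, a ≤ b → b + 1 ≤ k → gZ (a+1) - gZ a ≤ gZ (b+1) - gZ b := by
    intro a b hab hbk
    rw [hdiff a (by omega), hdiff b hbk]
    have m1 : ((a+1).choose (r'+1) : ℤ) ≤ ((b+1).choose (r'+1) : ℤ) := by
      exact_mod_cast Nat.choose_le_choose (r'+1) (by omega)
    have m2 : ((2*k-b).choose (r'+1) : ℤ) ≤ ((2*k-a).choose (r'+1) : ℤ) := by
      exact_mod_cast Nat.choose_le_choose (r'+1) (by omega)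
    have m3 : ((n:ℤ) - 2*k - 1 + a) * (a.choose r' : ℤ) ≤
        ((n:ℤ) - 2*k - 1 + b) * (b.choose r' : ℤ) := by
      have hnn : (0:ℤ) ≤ (n:ℤ) - 2*k - 1 + a := by
        have : (2*k+2 : ℤ) ≤ (n : ℤ) := by exact_mod_cast hn
        omega
      have c1 : (a.choose r' : ℤ) ≤ (b.choose r' : ℤ) := by
        exact_mod_cast Nat.choose_le_choose r' hab
      have c2 : ((n:ℤ) - 2*k - 1 + a) ≤ ((n:ℤ) - 2*k - 1 + b) := by
        have : (a:ℤ) ≤ (b:ℤ) := by exact_mod_cast hab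
        omega
      have c3 : (0:ℤ) ≤ (a.choose r' : ℤ) := by positivity
      exact mul_le_mul c2 c1 c3 (by omega)
    omega
  have hend := convex_endpoint hmono t ht
  have h0 : gZ 0 = ((2*k+1).choose (r'+2) : ℤ) := by
    simp [hgZ, Nat.choose_eq_zero_of_lt (by omega : 0 < r'+1)]
  have hk' : gZ k = (((k+1).choose (r'+2) + (n-k-1) * k.choose (r'+1) : ℕ) : ℤ) := by
    have e1 : 2*k+1-k = k+1 := by omega
    have e2 : ((n:ℤ) - 2*k - 1 + k) = ((n-k-1 : ℕ) : ℤ) := by omega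
    simp only [hgZ, e1, e2]
    push_cast
    ring
  have ht' : gZ t = (((2*k+1-t).choose (r'+2) + (n-(2*k+1-t)) * t.choose (r'+1) : ℕ) : ℤ) := by
    have e2 : ((n:ℤ) - 2*k - 1 + t) = ((n-(2*k+1-t) : ℕ) : ℤ) := by omega
    simp only [hgZ, e2]
    push_cast
    ring
  rw [ht', h0, hk'] at hend
  have hcast : max (((2*k+1).choose (r'+2) : ℕ) : ℤ)
      (((k+1).choose (r'+2) + (n-k-1) * k.choose (r'+1) : ℕ) : ℤ) =
      ((max ((2*k+1).choose (r'+2)) ((k+1).choose (r'+2) + (n-k-1) * k.choose (r'+1)) : ℕ) : ℤ) := by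
    exact_mod_cast (Nat.cast_max _ _).symm
  rw [hcast] at hend
  exact_mod_cast hend


lemma isBM_image_equiv {V : Type*} [DecidableEq V] {n : ℕ} (σ : V ≃ Fin n)
    (H : Finset (Finset V)) (m : ℕ)
    (h : IsBM (H.image (fun f => f.image σ)) m) : IsBM H m := by
  classical
  obtain ⟨e, x, y, heinj, hemem, hxy, hpair⟩ := h
  refine ⟨fun s => (e s).image σ.symm, fun s => σ.symm (x s), fun s => σ.symm (y s),
    ?_, ?_, ?_, ?_⟩
  · intro s t heq
    exact heinj (Finset.image_injective σ.symm.injective heq)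
  · intro s
    obtain ⟨f, hf, hfe⟩ := mem_image.1 (hemem s)
    show (e s).image σ.symm ∈ H
    have he : (e s).image σ.symm = f := by
      rw [← hfe, Finset.image_image]
      simp
    rw [he]
    exact hf
  · have he : Sum.elim (fun s => σ.symm (x s)) (fun s => σ.symm (y s)) =
        σ.symm ∘ Sum.elim x y := by
      funext s; cases s <;> rfl
    rw [he]
    exact σ.symm.injective.comp hxy
  · intro s
    exact ⟨mem_image_of_mem _ (hpair s).1, mem_image_of_mem _ (hpair s).2⟩

theorem stmt12 {V : Type*} [Fintype V] [DecidableEq V] (n k r : ℕ) (hn : Fintype.card V = n)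
    (hrk : r ≤ k - 1) (hn2 : 2 * k + 2 ≤ n) (H : Finset (Finset V))
    (hU : ∀ e ∈ H, e.card = r)
    (hB : ¬ ∃ (e : Fin (k + 1) → Finset V) (x y : Fin (k + 1) → V),
        Function.Injective e ∧ (∀ i, e i ∈ H) ∧ Function.Injective (Sum.elim x y) ∧
        ∀ i, x i ∈ e i ∧ y i ∈ e i) :
    H.card ≤ max ((2 * k + 1).choose r) ((k + 1).choose r + (n - k - 1) * k.choose (r - 1)) := by
  classical
  have hBM : ¬ IsBM H (k + 1) := hB
  have hcardle : H.card ≤ n.choose r := by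
    have hsub : H ⊆ Finset.powersetCard r (univ : Finset V) := by
      intro f hf
      exact mem_powersetCard.2 ⟨subset_univ f, hU f hf⟩
    calc H.card ≤ (Finset.powersetCard r (univ : Finset V)).card := card_le_card hsub
      _ = n.choose r := by rw [Finset.card_powersetCard, card_univ, hn]
  by_cases hr2 : 2 ≤ r
  case neg =>
    interval_cases r
    · refine le_trans hcardle (le_trans ?_ (le_max_left _ _))
      simp
    · refine le_trans hcardle (le_trans ?_ (le_max_right _ _))
      simp only [Nat.choose_one_right, show (1:ℕ)-1 = 0 from rfl, Nat.choose_zero_right,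
        mul_one]
      omega
  case pos =>
    have hrk' : r + 1 ≤ k := by omega
    set σ : V ≃ Fin n := Fintype.equivFinOfCardEq hn with hσ
    set H₀ := H.image (fun f => f.image σ) with hH0
    have hcard0 : H₀.card = H.card :=
      card_image_of_injective _ (Finset.image_injective σ.injective)
    have hU0 : ∀ f ∈ H₀, f.card = r := by
      intro f hf
      obtain ⟨f0, hf0, rfl⟩ := mem_image.1 hf
      rw [Finset.card_image_of_injective _ σ.injective]
      exact hU f0 hf0
    have hB0 : ¬ IsBM H₀ (k+1) := fun h => hBM (isBM_image_equiv σ H (k+1) h)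
    obtain ⟨H₁, hS1, hc1, hU1, hBM1⟩ := exists_shifted (wtF H₀) H₀ le_rfl hU0
    have hB1 : ¬ IsBM H₁ (k+1) := fun h => hB0 (hBM1 (k+1) h)
    obtain ⟨t, ht, hstruct⟩ := structure_lemma hr2 hrk' hn2 hS1 hU1 hB1
    have hcount := count_lemma ht hn2 hr2 hU1 hstruct
    have hmax := h_max hr2 hrk' hn2 ht
    calc H.card = H₁.card := by rw [hc1, hcard0]
      _ ≤ (2*k+1-t).choose r + (n-(2*k+1-t)) * t.choose (r-1) := hcount
      _ ≤ _ := hmax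
end

section
/- Let r ≥ 2 and k ≥ 1. The r-clique hypergraph of H(n,k,k) — the hypergraph on n vertices whose hyperedges are all r-subsets of V that either lie inside a fixed (k+1)-set K∪{v}, or consist of r−1 vertices of a fixed k-set K together with one other vertex — contains no Berge matching of size k+1. -/
/-!
Every admissible edge has at most one vertex outside `K`, so each of the disjoint pairs `{x i, y i}`
has an endpoint in `K`. Choosing such an endpoint for each pair injects the `k + 1` pairs into the
`k`-set `K`.
-/

section

open Finset Function

variable {α ι : Type*}

lemma card_sdiff_le_one_of_subset_insert [DecidableEq α] {s K : Finset α} {v : α}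
    (h : s ⊆ insert v K) : #(s \ K) ≤ 1 :=
  card_le_one.2 fun a ha b hb => by
    simp only [mem_sdiff] at ha hb
    have ha' := h ha.1
    have hb' := h hb.1
    simp_all

lemma mem_or_mem_of_card_sdiff_le_one [DecidableEq α] {s K : Finset α} {a b : α}
    (hs : #(s \ K) ≤ 1) (ha : a ∈ s) (hb : b ∈ s) (hab : a ≠ b) : a ∈ K ∨ b ∈ K := by
  by_contra! h
  exact hab (card_le_one.1 hs a (mem_sdiff.2 ⟨ha, h.1⟩) b (mem_sdiff.2 ⟨hb, h.2⟩))

lemma Function.Injective.of_forall_eq_or_eq_of_sumElim {x y f : ι → α}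
    (hxy : Injective (Sum.elim x y)) (hf : ∀ i, f i = x i ∨ f i = y i) : Injective f := by
  intro i j hij
  rcases hf i with hi | hi <;> rcases hf j with hj | hj <;> rw [hi, hj] at hij
  · simpa using @hxy (.inl i) (.inl j) hij
  · simpa using @hxy (.inl i) (.inr j) hij
  · simpa using @hxy (.inr i) (.inl j) hij
  · simpa using @hxy (.inr i) (.inr j) hij

/-- Pairwise disjoint pairs that all meet `K` are at most `#K` in number. -/
lemma card_le_card_of_injective_sumElim [Fintype ι] {K : Finset α} {x y : ι → α}
    (hxy : Injective (Sum.elim x y)) (hK : ∀ i, x i ∈ K ∨ y i ∈ K) : Fintype.card ι ≤ #K := by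
  classical
  let f i := if x i ∈ K then x i else y i
  have hfK : ∀ i, f i ∈ K := fun i => by
    by_cases h : x i ∈ K
    · simp [f, h]
    · simpa [f, h] using (hK i).resolve_left h
  have hf : Injective f := hxy.of_forall_eq_or_eq_of_sumElim fun i => by
    by_cases h : x i ∈ K <;> simp [f, h]
  simpa only [card_univ] using card_le_card_of_injOn (s := univ) f (fun i _ => hfK i) hf.injOn

end

theorem stmt13_general {V : Type*} [DecidableEq V] (k r : ℕ)
    (K : Finset V) (hK : K.card = k) (v : V) :
    ¬ ∃ (e : Fin (k + 1) → Finset V) (x y : Fin (k + 1) → V),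
        Function.Injective e ∧
        (∀ i, (e i).card = r ∧ (e i ⊆ insert v K ∨ (e i \ K).card = 1)) ∧
        Function.Injective (Sum.elim x y) ∧ ∀ i, x i ∈ e i ∧ y i ∈ e i := by
  rintro ⟨e, x, y, -, hedge, hxy, hmem⟩
  have houtside : ∀ i, (e i \ K).card ≤ 1 := fun i =>
    (hedge i).2.elim card_sdiff_le_one_of_subset_insert le_of_eq
  have hmeet : ∀ i, x i ∈ K ∨ y i ∈ K := fun i =>
    mem_or_mem_of_card_sdiff_le_one (houtside i) (hmem i).1 (hmem i).2 (hxy.ne Sum.inl_ne_inr)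
  simpa [hK] using card_le_card_of_injective_sumElim hxy hmeet

theorem stmt13 {V : Type*} [Fintype V] [DecidableEq V] (k r : ℕ) (hr : 2 ≤ r) (hk : 1 ≤ k)
    (K : Finset V) (hK : K.card = k) (v : V) (hv : v ∉ K) :
    ¬ ∃ (e : Fin (k + 1) → Finset V) (x y : Fin (k + 1) → V),
        Function.Injective e ∧
        (∀ i, (e i).card = r ∧ (e i ⊆ insert v K ∨ (e i \ K).card = 1)) ∧
        Function.Injective (Sum.elim x y) ∧ ∀ i, x i ∈ e i ∧ y i ∈ e i :=
  stmt13_general k r K hK v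
end

section
/- Let c_1 ≥ c_2 ≥ ⋯ ≥ c_m ≥ 1 be odd integers with Σ c_i = n − t and Σ ⌊c_i/2⌋ = k − t, where 0 ≤ t ≤ k and n ≥ 2k+2. Then the number of edges of the graph H(n,k,t,(c_1,…,c_m)) = K_t + (K_{c_1} ∪ ⋯ ∪ K_{c_m}) is at most the number of edges of H(n,k,t) = K_t + (K_{2k+1−2t} ∪ (n−2k−1+t)K_1), which equals C(2k+1−t, 2) + (n−2k−1+t)·t. -/
/-!
Write each odd part as `c i = 2 a i + 1`, so that `C(c i, 2) = 2 a i ^ 2 + a i` with `∑ a i = k - t`.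
Since `∑ a i ^ 2 ≤ (∑ a i) ^ 2`, the cliques on the odd parts have at most as many edges as the single
clique `K_{2(k-t)+1}`. Merging that clique with `K_t` gives `K_{2k+1-t}`, and the `t(n-t)` join edges
split into the `t(2(k-t)+1)` edges absorbed by the merged clique and the `(n-2k-1+t) t` edges to the
isolated vertices.
-/

open Finset

lemma Nat.add_choose_two (a b : ℕ) : (a + b).choose 2 = a.choose 2 + b.choose 2 + a * b := by
  induction b with
  | zero => simp
  | succ b ih =>
    rw [← add_assoc, Nat.choose_succ_succ', ih, Nat.choose_succ_succ' b, Nat.choose_one_right,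
      Nat.choose_one_right]
    ring

lemma Nat.two_mul_add_one_choose_two (a : ℕ) : (2 * a + 1).choose 2 = 2 * a ^ 2 + a := by
  induction a with
  | zero => rfl
  | succ a ih =>
    rw [show 2 * (a + 1) + 1 = (2 * a + 1) + 2 by ring, Nat.add_choose_two, ih]
    simp only [Nat.choose_self]
    ring

lemma Finset.sum_choose_two_le_of_odd {ι : Type*} {s : Finset ι} {c : ι → ℕ}
    (hc : ∀ i ∈ s, Odd (c i)) :
    ∑ i ∈ s, (c i).choose 2 ≤ (2 * ∑ i ∈ s, c i / 2 + 1).choose 2 := by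
  have hparts : ∑ i ∈ s, (c i).choose 2 = 2 * ∑ i ∈ s, (c i / 2) ^ 2 + ∑ i ∈ s, c i / 2 := by
    rw [mul_sum, ← sum_add_distrib]
    refine sum_congr rfl fun i hi ↦ ?_
    rw [← Nat.two_mul_add_one_choose_two, Nat.two_mul_div_two_add_one_of_odd (hc i hi)]
  have hsq := sum_sq_le_sq_sum_of_nonneg (s := s) (f := fun i ↦ c i / 2) fun _ _ ↦ Nat.zero_le _
  rw [hparts, Nat.two_mul_add_one_choose_two]
  omega

theorem stmt18_general (n k t m : ℕ) (c : Fin m → ℕ) (hodd : ∀ i, Odd (c i))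
    (hhalf : ∑ i, c i / 2 = k - t)
    (ht : t ≤ k) (hn : 2 * k + 2 ≤ n) :
    t.choose 2 + (∑ i, (c i).choose 2) + t * (n - t) ≤
      (2 * k + 1 - t).choose 2 + (n - (2 * k + 1) + t) * t := by
  have hcliques := sum_choose_two_le_of_odd (s := univ) fun i _ ↦ hodd i
  rw [hhalf] at hcliques
  have hmerge : (2 * k + 1 - t).choose 2 = t.choose 2 + (2 * (k - t) + 1).choose 2
      + t * (2 * (k - t) + 1) := by
    rw [← Nat.add_choose_two]
    congr 1
    omega
  have hjoin : t * (n - t) = t * (2 * (k - t) + 1) + (n - (2 * k + 1) + t) * t := by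
    rw [mul_comm _ t, ← mul_add]
    congr 1
    omega
  omega

theorem stmt18 (n k t m : ℕ) (c : Fin m → ℕ) (hodd : ∀ i, Odd (c i)) (hmono : Antitone c)
    (hsum : ∑ i, c i = n - t) (hhalf : ∑ i, c i / 2 = k - t)
    (ht : t ≤ k) (hn : 2 * k + 2 ≤ n) :
    t.choose 2 + (∑ i, (c i).choose 2) + t * (n - t) ≤
      (2 * k + 1 - t).choose 2 + (n - (2 * k + 1) + t) * t :=
  stmt18_general n k t m c hodd hhalf ht hn
end
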